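/- arXiv:1606.01944 — 9 statements merged into one kernel-verified Lean document; each statement's English description precedes it below -/
import Mathlib

section
/- Let k ≥ 1 be an integer and S > 0. Let C_1, …, C_m be subsets of ℝ^d whose union is ℝ^d, such that for each i and all nonzero y, z ∈ C_i one has ‖y/‖y‖ − z/‖z‖‖ < 1. Let V be a finite set of points in ℝ^d containing the origin 0, in which all pairwise distances between distinct points are distinct, and suppose that for each i the set C_i contains at least k+1 points of V \ {0} of norm strictly less than S. Then for every nonzero v ∈ V: if 0 is a k-nearest neighbor of v in V, or v is a k-nearest neighbor of 0 in V, then ‖v‖ < S. -/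
/-- All pairwise distances between distinct points of `V` are distinct. -/
def DistinctDists {d : ℕ} (V : Set (EuclideanSpace ℝ (Fin d))) : Prop :=
  ∀ u v u' v', u ∈ V → v ∈ V → u' ∈ V → v' ∈ V → u ≠ v → u' ≠ v' →
    dist u v = dist u' v' → (u = u' ∧ v = v') ∨ (u = v' ∧ v = u')

/-- `u` is a `k`-nearest neighbor of `v` within `V`:  `u ∈ V \ {v}` and fewer than `k`
points of `V \ {v}` are strictly closer to `v` than `u` is. -/
def IsKNNOf {d : ℕ} (k : ℕ) (V : Set (EuclideanSpace ℝ (Fin d)))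
    (u v : EuclideanSpace ℝ (Fin d)) : Prop :=
  u ∈ V ∧ u ≠ v ∧ {w | w ∈ V ∧ w ≠ v ∧ dist w v < dist u v}.ncard < k

/-!
Suppose `‖v‖ ≥ S` and pick a cone `C i` containing `v`. The `k + 1` points `p` of `V \ {0}` in
`C i` with `‖p‖ < S` are all closer to `0` than `v` is. They are also closer to `v` than `0` is:
the cone condition says that any two directions in `C i` make an angle below `60°`, and then
`‖p‖ ≤ ‖v‖` forces `‖p - v‖ < ‖v‖`. Either way at least `k` points of `V` beat the candidate neighbour.
-/

open RealInnerProductSpace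

lemma norm_sub_lt_of_norm_normalize_sub_lt_one {E : Type*} [NormedAddCommGroup E]
    [InnerProductSpace ℝ E] {y z : E} (hy : y ≠ 0) (hz : z ≠ 0)
    (hyz : ‖‖y‖⁻¹ • y - ‖z‖⁻¹ • z‖ < 1) (hle : ‖y‖ ≤ ‖z‖) : ‖y - z‖ < ‖z‖ := by
  have ha : 0 < ‖y‖ := norm_pos_iff.mpr hy
  have hb : 0 < ‖z‖ := norm_pos_iff.mpr hz
  have hunit : ‖‖y‖⁻¹ • y - ‖z‖⁻¹ • z‖ ^ 2 = 2 - 2 * ⟪y, z⟫ / (‖y‖ * ‖z‖) := by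
    rw [norm_sub_sq_real, real_inner_smul_left, real_inner_smul_right, norm_smul, norm_smul,
      norm_inv, norm_inv, norm_norm, norm_norm]
    field_simp
    ring
  have hinner : ‖y‖ * ‖z‖ < 2 * ⟪y, z⟫ := by
    have := pow_lt_one₀ (norm_nonneg _) hyz two_ne_zero
    rw [hunit, sub_lt_comm, lt_div_iff₀ (by positivity)] at this
    linarith
  refine lt_of_pow_lt_pow_left₀ 2 hb.le ?_
  rw [norm_sub_sq_real]
  nlinarith

lemma not_isKNNOf_of_ncard_closer {d k : ℕ} {V P : Set (EuclideanSpace ℝ (Fin d))}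
    {u v : EuclideanSpace ℝ (Fin d)} (hV : V.Finite) (hP : k ≤ P.ncard)
    (hcloser : P ⊆ {w | w ∈ V ∧ w ≠ v ∧ dist w v < dist u v}) : ¬ IsKNNOf k V u v :=
  fun ⟨_, _, hlt⟩ =>
    hlt.not_ge (hP.trans (Set.ncard_le_ncard hcloser (hV.subset fun _ hw => hw.1)))

theorem norm_lt_of_kNN_zero_general (d k m : ℕ) (S : ℝ)
    (C : Fin m → Set (EuclideanSpace ℝ (Fin d)))
    (hC : (⋃ i, C i) = Set.univ)
    (hcone : ∀ i, ∀ y ∈ C i, ∀ z ∈ C i, y ≠ 0 → z ≠ 0 →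
      ‖‖y‖⁻¹ • y - ‖z‖⁻¹ • z‖ < 1)
    (V : Set (EuclideanSpace ℝ (Fin d))) (hVfin : V.Finite)
    (hpts : ∀ i, k + 1 ≤ {p | p ∈ V ∧ p ≠ 0 ∧ p ∈ C i ∧ ‖p‖ < S}.ncard)
    (v : EuclideanSpace ℝ (Fin d)) (hv0 : v ≠ 0)
    (hknn : IsKNNOf k V 0 v ∨ IsKNNOf k V v 0) :
    ‖v‖ < S := by
  by_contra! hvS
  obtain ⟨i, hvC⟩ : ∃ i, v ∈ C i := Set.mem_iUnion.mp (hC ▸ Set.mem_univ v)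
  have hk : k ≤ {p | p ∈ V ∧ p ≠ 0 ∧ p ∈ C i ∧ ‖p‖ < S}.ncard := (hpts i).trans' k.le_succ
  rcases hknn with hknn | hknn
  · refine not_isKNNOf_of_ncard_closer hVfin hk ?_ hknn
    rintro p ⟨hpV, hp0, hpC, hpS⟩
    have hpv : ‖p‖ < ‖v‖ := hpS.trans_le hvS
    refine ⟨hpV, by rintro rfl; exact hpv.false, ?_⟩
    rw [dist_eq_norm, dist_zero_left]
    exact norm_sub_lt_of_norm_normalize_sub_lt_one hp0 hv0 (hcone i p hpC v hvC hp0 hv0) hpv.le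
  · refine not_isKNNOf_of_ncard_closer hVfin hk ?_ hknn
    rintro p ⟨hpV, hp0, -, hpS⟩
    refine ⟨hpV, hp0, ?_⟩
    rw [dist_zero_right, dist_zero_right]
    exact hpS.trans_le hvS

/-- Lemma on the radius of stabilization: if every cone `C i` contains at least `k+1` points of
`V \ {0}` of norm `< S`, then any point `v ∈ V` such that `0` is a `k`NN of `v` or `v` is a
`k`NN of `0` satisfies `‖v‖ < S`. -/
theorem norm_lt_of_kNN_zero (d k m : ℕ) (hk : 1 ≤ k) (S : ℝ) (hS : 0 < S)
    (C : Fin m → Set (EuclideanSpace ℝ (Fin d)))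
    (hC : (⋃ i, C i) = Set.univ)
    (hcone : ∀ i, ∀ y ∈ C i, ∀ z ∈ C i, y ≠ 0 → z ≠ 0 →
      ‖‖y‖⁻¹ • y - ‖z‖⁻¹ • z‖ < 1)
    (V : Set (EuclideanSpace ℝ (Fin d))) (hVfin : V.Finite)
    (h0 : (0 : EuclideanSpace ℝ (Fin d)) ∈ V)
    (hdist : DistinctDists V)
    (hpts : ∀ i, k + 1 ≤ {p | p ∈ V ∧ p ≠ 0 ∧ p ∈ C i ∧ ‖p‖ < S}.ncard)
    (v : EuclideanSpace ℝ (Fin d)) (hv : v ∈ V) (hv0 : v ≠ 0)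
    (hknn : IsKNNOf k V 0 v ∨ IsKNNOf k V v 0) :
    ‖v‖ < S :=
  norm_lt_of_kNN_zero_general d k m S C hC hcone V hVfin hpts v hv0 hknn
end

section
/- Let k ≥ 1 be an integer and let S, T > 0 be real numbers with T > 3S. Let C_1, …, C_m be subsets of ℝ^d whose union is ℝ^d, such that for each i and all nonzero y, z ∈ C_i one has ‖y/‖y‖ − z/‖z‖‖ < 1. Let V be a finite set of points in ℝ^d in which all pairwise distances between distinct points are distinct, and suppose that for each i the set C_i contains at least k points of V whose norms lie in the interval (3S, T]. Let u, v ∈ V with ‖u‖ < S and ‖v‖ > 3T. Then u is not a k-nearest neighbor of v in V, and v is not a k-nearest neighbor of u in V. -/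
/-!
If `v` lies in the cone `C i`, every point `p` of `V ∩ C i` with `3S < ‖p‖ ≤ T` makes an angle
of less than `60°` with `v` and is much shorter than `v`, which forces `‖p - v‖ < ‖v‖ - S`;
on the other hand `‖u - v‖ > ‖v‖ - S`. So at least `k` points of `V` are closer to `v` than `u`
is. In the other direction, all those points lie within `T + S` of `u`, while `v` is farther
than `3T - S` from `u`.
-/

open RealInnerProductSpace

section InnerProductSpace

variable {E : Type*} [NormedAddCommGroup E] [InnerProductSpace ℝ E]

/-- Unit vectors at distance `< 1` make an angle of less than `π / 3`. -/
theorem norm_mul_norm_lt_two_mul_inner {x y : E} (hx : x ≠ 0) (hy : y ≠ 0)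
    (h : ‖‖x‖⁻¹ • x - ‖y‖⁻¹ • y‖ < 1) : ‖x‖ * ‖y‖ < 2 * ⟪x, y⟫ := by
  have hxy : 0 < ‖x‖ * ‖y‖ := mul_pos (norm_pos_iff.mpr hx) (norm_pos_iff.mpr hy)
  have hunit : ∀ z : E, z ≠ 0 → ‖‖z‖⁻¹ • z‖ = 1 := fun z hz => by
    rw [norm_smul, norm_inv, norm_norm, inv_mul_cancel₀ (norm_ne_zero_iff.mpr hz)]
  have hsq : ‖‖x‖⁻¹ • x - ‖y‖⁻¹ • y‖ ^ 2 = 2 - 2 * (⟪x, y⟫ / (‖x‖ * ‖y‖)) := by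
    rw [norm_sub_sq_real, hunit x hx, hunit y hy, real_inner_smul_left, real_inner_smul_right]
    field_simp
    ring
  have hcos : 1 / 2 < ⟪x, y⟫ / (‖x‖ * ‖y‖) := by
    nlinarith [pow_lt_one₀ (norm_nonneg _) h two_ne_zero]
  rw [lt_div_iff₀ hxy] at hcos
  linarith

theorem norm_sub_lt_norm_sub_of_normalize_close {x y : E} {S : ℝ} (hS : 0 ≤ S)
    (hSx : 3 * S < ‖x‖) (hxy : 3 * ‖x‖ < ‖y‖) (h : ‖‖x‖⁻¹ • x - ‖y‖⁻¹ • y‖ < 1) :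
    ‖x - y‖ < ‖y‖ - S := by
  have hx : x ≠ 0 := norm_pos_iff.mp (by linarith)
  have hy : y ≠ 0 := norm_pos_iff.mp (by linarith)
  have hinner := norm_mul_norm_lt_two_mul_inner hx hy h
  have hsq : ‖x - y‖ ^ 2 < (‖y‖ - S) ^ 2 := by
    rw [norm_sub_sq_real]
    -- `‖x‖ (‖x‖ - ‖y‖) < 3S (‖x‖ - ‖y‖) < -2S‖y‖`
    nlinarith [mul_lt_mul_of_pos_right hSx (by linarith : 0 < ‖y‖ - ‖x‖)]
  exact lt_of_pow_lt_pow_left₀ 2 (by linarith) hsq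

end InnerProductSpace

theorem not_isKNNOf_of_subset {d k : ℕ} {V P : Set (EuclideanSpace ℝ (Fin d))}
    {u v : EuclideanSpace ℝ (Fin d)} (hV : V.Finite) (hPV : P ⊆ V) (hkP : k ≤ P.ncard)
    (hcloser : ∀ p ∈ P, p ≠ v ∧ dist p v < dist u v) : ¬ IsKNNOf k V u v := by
  rintro ⟨-, -, hcard⟩
  have hsub : P ⊆ {w | w ∈ V ∧ w ≠ v ∧ dist w v < dist u v} :=
    fun p hp => ⟨hPV hp, hcloser p hp⟩
  have := Set.ncard_le_ncard hsub (hV.subset fun w hw => hw.1)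
  omega

theorem not_kNN_of_far_general (d k m : ℕ) (S T : ℝ)
    (hTS : 3 * S < T)
    (C : Fin m → Set (EuclideanSpace ℝ (Fin d)))
    (hC : (⋃ i, C i) = Set.univ)
    (hcone : ∀ i, ∀ y ∈ C i, ∀ z ∈ C i, y ≠ 0 → z ≠ 0 →
      ‖‖y‖⁻¹ • y - ‖z‖⁻¹ • z‖ < 1)
    (V : Set (EuclideanSpace ℝ (Fin d))) (hVfin : V.Finite)
    (hpts : ∀ i, k ≤ {p | p ∈ V ∧ p ∈ C i ∧ 3 * S < ‖p‖ ∧ ‖p‖ ≤ T}.ncard)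
    (u v : EuclideanSpace ℝ (Fin d))
    (huS : ‖u‖ < S) (hvT : 3 * T < ‖v‖) :
    ¬ IsKNNOf k V u v ∧ ¬ IsKNNOf k V v u := by
  have hS : 0 < S := (norm_nonneg u).trans_lt huS
  obtain ⟨i, hvi⟩ : ∃ i, v ∈ C i := Set.mem_iUnion.mp (hC ▸ Set.mem_univ v)
  have huv : ‖v‖ - S < ‖u - v‖ := by
    linarith [norm_sub_norm_le v u, norm_sub_rev v u]
  have hsubV : {p | p ∈ V ∧ p ∈ C i ∧ 3 * S < ‖p‖ ∧ ‖p‖ ≤ T} ⊆ V := fun p hp => hp.1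
  refine ⟨not_isKNNOf_of_subset hVfin hsubV (hpts i) ?_,
    not_isKNNOf_of_subset hVfin hsubV (hpts i) ?_⟩
  all_goals rintro p ⟨-, hpi, hSp, hpT⟩
  · have hpv : 3 * ‖p‖ < ‖v‖ := by linarith
    have hp0 : p ≠ 0 := norm_pos_iff.mp (by linarith)
    have hv0 : v ≠ 0 := norm_pos_iff.mp (by linarith)
    refine ⟨fun h => by rw [h] at hpv; linarith [norm_nonneg v], ?_⟩
    rw [dist_eq_norm, dist_eq_norm]
    linarith [norm_sub_lt_norm_sub_of_normalize_close hS.le hSp hpv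
      (hcone i p hpi v hvi hp0 hv0)]
  · refine ⟨fun h => by rw [h] at hSp; linarith, ?_⟩
    rw [dist_eq_norm, dist_eq_norm, norm_sub_rev v u]
    linarith [norm_sub_le p u]

/-- Second stabilization lemma: if each cone `C i` contains at least `k` points of `V` with
norms in `(3S, T]`, `‖u‖ < S` and `‖v‖ > 3T` with `T > 3S`, then `u` and `v` are not
`k`-nearest neighbors of each other in `V`. -/
theorem not_kNN_of_far (d k m : ℕ) (hk : 1 ≤ k) (S T : ℝ) (hS : 0 < S) (hT : 0 < T)
    (hTS : 3 * S < T)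
    (C : Fin m → Set (EuclideanSpace ℝ (Fin d)))
    (hC : (⋃ i, C i) = Set.univ)
    (hcone : ∀ i, ∀ y ∈ C i, ∀ z ∈ C i, y ≠ 0 → z ≠ 0 →
      ‖‖y‖⁻¹ • y - ‖z‖⁻¹ • z‖ < 1)
    (V : Set (EuclideanSpace ℝ (Fin d))) (hVfin : V.Finite)
    (hdist : DistinctDists V)
    (hpts : ∀ i, k ≤ {p | p ∈ V ∧ p ∈ C i ∧ 3 * S < ‖p‖ ∧ ‖p‖ ≤ T}.ncard)
    (u v : EuclideanSpace ℝ (Fin d)) (hu : u ∈ V) (hv : v ∈ V)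
    (huS : ‖u‖ < S) (hvT : 3 * T < ‖v‖) :
    ¬ IsKNNOf k V u v ∧ ¬ IsKNNOf k V v u :=
  not_kNN_of_far_general d k m S T hTS C hC hcone V hVfin hpts u v huS hvT
end

section
/- Let v_1, …, v_m be distinct nonzero points of ℝ^d such that for all i ≠ j one has ‖v_i − v_j‖ > ‖v_i‖ and ‖v_i − v_j‖ > ‖v_j‖ (i.e., each pair is farther from each other than either point is from the origin). Then the normalized points a_i = v_i/‖v_i‖ lie on the unit sphere and satisfy ‖a_i − a_j‖ > 1 for all i ≠ j. -/
/-!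
Writing `‖x - y‖² = ‖x‖² - 2⟪x, y⟫ + ‖y‖²`, the hypotheses say exactly that `2⟪x, y⟫` is below both
`‖x‖²` and `‖y‖²`, hence below `‖x‖ ‖y‖`. So the unit vectors `x / ‖x‖`, `y / ‖y‖` have inner product
less than `1/2`, i.e. they make an angle greater than `π/3`, and their squared distance
`2 - 2⟪x / ‖x‖, y / ‖y‖⟫` exceeds `1`.
-/

section InnerProductSpace

variable {E : Type*} [NormedAddCommGroup E] [InnerProductSpace ℝ E]

open RealInnerProductSpace

theorem two_inner_lt_norm_sq_of_norm_lt_norm_sub {x y : E} (h : ‖x‖ < ‖x - y‖) :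
    2 * ⟪x, y⟫ < ‖y‖ ^ 2 := by
  have hsq : ‖x‖ ^ 2 < ‖x - y‖ ^ 2 := pow_lt_pow_left₀ h (norm_nonneg x) two_ne_zero
  rw [norm_sub_sq_real] at hsq
  linarith

theorem two_inner_lt_norm_mul_norm {x y : E} (hx : ‖x‖ < ‖x - y‖) (hy : ‖y‖ < ‖x - y‖) :
    2 * ⟪x, y⟫ < ‖x‖ * ‖y‖ := by
  have hltx := two_inner_lt_norm_sq_of_norm_lt_norm_sub (hy.trans_eq (norm_sub_rev x y))
  have hlty := two_inner_lt_norm_sq_of_norm_lt_norm_sub hx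
  rw [real_inner_comm] at hltx
  rcases le_total ‖x‖ ‖y‖ with hle | hle
  · nlinarith [mul_le_mul_of_nonneg_left hle (norm_nonneg x)]
  · nlinarith [mul_le_mul_of_nonneg_left hle (norm_nonneg y)]

theorem one_lt_norm_sub_of_inner_lt_half {a b : E} (ha : ‖a‖ = 1) (hb : ‖b‖ = 1)
    (hab : ⟪a, b⟫ < 1 / 2) : 1 < ‖a - b‖ := by
  have hsq : 1 < ‖a - b‖ ^ 2 := by
    rw [norm_sub_sq_real, ha, hb]
    linarith
  nlinarith [norm_nonneg (a - b)]

theorem one_lt_norm_sub_normalize {x y : E} (hx0 : x ≠ 0) (hy0 : y ≠ 0)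
    (hx : ‖x‖ < ‖x - y‖) (hy : ‖y‖ < ‖x - y‖) :
    1 < ‖‖x‖⁻¹ • x - ‖y‖⁻¹ • y‖ := by
  refine one_lt_norm_sub_of_inner_lt_half (norm_smul_inv_norm hx0) (norm_smul_inv_norm hy0) ?_
  have hpos : 0 < ‖x‖ * ‖y‖ := mul_pos (norm_pos_iff.mpr hx0) (norm_pos_iff.mpr hy0)
  rw [real_inner_smul_left, real_inner_smul_right, ← mul_assoc, ← mul_inv, inv_mul_lt_iff₀ hpos]
  linarith [two_inner_lt_norm_mul_norm hx hy]

end InnerProductSpace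

theorem normalized_dist_gt_one_general (d m : ℕ) (v : Fin m → EuclideanSpace ℝ (Fin d))
    (hne : ∀ i, v i ≠ 0)
    (hfar : ∀ i j, i ≠ j → ‖v i‖ < ‖v i - v j‖ ∧ ‖v j‖ < ‖v i - v j‖) :
    (∀ i, ‖‖v i‖⁻¹ • v i‖ = 1) ∧
    (∀ i j, i ≠ j → 1 < ‖‖v i‖⁻¹ • v i - ‖v j‖⁻¹ • v j‖) :=
  ⟨fun i => norm_smul_inv_norm (hne i), fun i j hij =>
    one_lt_norm_sub_normalize (hne i) (hne j) (hfar i j hij).1 (hfar i j hij).2⟩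

/-- If `v 1, …, v m` are distinct nonzero points such that each pair is farther from each other
than either point is from the origin, then their normalizations lie on the unit sphere and have
pairwise distances strictly greater than `1`. -/
theorem normalized_dist_gt_one (d m : ℕ) (v : Fin m → EuclideanSpace ℝ (Fin d))
    (hinj : Function.Injective v) (hne : ∀ i, v i ≠ 0)
    (hfar : ∀ i j, i ≠ j → ‖v i‖ < ‖v i - v j‖ ∧ ‖v j‖ < ‖v i - v j‖) :
    (∀ i, ‖‖v i‖⁻¹ • v i‖ = 1) ∧
    (∀ i j, i ≠ j → 1 < ‖‖v i‖⁻¹ • v i - ‖v j‖⁻¹ • v j‖) :=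
  normalized_dist_gt_one_general d m v hne hfar
end

section
/- Let k ≥ 1 be an integer, let V be a finite set of points in ℝ^d containing the origin 0 in which all pairwise distances between distinct points are distinct, and let v_1, …, v_m be distinct points of V \ {0} each of which has 0 among its k nearest neighbors in V. Then there exists a subset {u_1, …, u_t} of {v_1, …, v_m} with m ≤ t·k such that ‖u_i − u_j‖ > max{‖u_i‖, ‖u_j‖} for all 1 ≤ i ≠ j ≤ t. -/
namespace DistinctDists

variable {d : ℕ} {V : Set (EuclideanSpace ℝ (Fin d))}

theorem dist_ne (hdist : DistinctDists V) {w x c : EuclideanSpace ℝ (Fin d)}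
    (hw : w ∈ V) (hx : x ∈ V) (hc : c ∈ V) (hwx : w ≠ x) (hcx : c ≠ x) (hwc : w ≠ c) :
    dist w x ≠ dist c x := fun h ↦ by
  rcases hdist w x c x hw hx hc hx hwx hcx h with ⟨hwc', -⟩ | ⟨hwx', -⟩
  exacts [hwc hwc', hwx hwx']

end DistinctDists

section Greedy

open Finset

variable {d k : ℕ} {V : Set (EuclideanSpace ℝ (Fin d))} {c : EuclideanSpace ℝ (Fin d)}

theorem card_filter_dist_le_of_isKNNOf (hVfin : V.Finite) (hdist : DistinctDists V)
    {x : EuclideanSpace ℝ (Fin d)} (hxV : x ∈ V) (hx : IsKNNOf k V c x)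
    (S : Finset (EuclideanSpace ℝ (Fin d))) (hSV : ↑S ⊆ V) (hcS : c ∉ S) :
    #{w ∈ S | dist w x ≤ dist c x} ≤ k := by
  set closer := {w | w ∈ V ∧ w ≠ x ∧ dist w x < dist c x}
  have hsub : ↑{w ∈ S | dist w x ≤ dist c x} ⊆ insert x closer := by
    intro w hw
    obtain ⟨hwS, hwle⟩ := mem_filter.1 hw
    rcases eq_or_ne w x with rfl | hwx
    · exact Set.mem_insert w _
    have hwc : w ≠ c := fun h ↦ hcS (h ▸ hwS)
    exact Or.inr ⟨hSV hwS, hwx, hwle.lt_of_ne (hdist.dist_ne (hSV hwS) hxV hx.1 hwx hx.2.1 hwc)⟩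
  calc #{w ∈ S | dist w x ≤ dist c x}
      = (↑{w ∈ S | dist w x ≤ dist c x} : Set _).ncard := (Set.ncard_coe_finset _).symm
    _ ≤ (insert x closer).ncard := Set.ncard_le_ncard hsub ((hVfin.subset fun _ h ↦ h.1).insert x)
    _ ≤ closer.ncard + 1 := Set.ncard_insert_le x closer
    _ ≤ k := hx.2.2

theorem exists_subset_pairwise_max_dist_lt (hVfin : V.Finite) (hdist : DistinctDists V)
    (S : Finset (EuclideanSpace ℝ (Fin d))) (hSV : ↑S ⊆ V) (hS : ∀ x ∈ S, IsKNNOf k V c x) :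
    ∃ T ⊆ S, #S ≤ #T * k ∧
      (T : Set _).Pairwise fun u w ↦ max (dist u c) (dist w c) < dist u w := by
  induction S using Finset.strongInduction with
  | H S ih =>
  rcases S.eq_empty_or_nonempty with rfl | hne
  · exact ⟨∅, subset_refl _, by simp, by simp⟩
  obtain ⟨x, hxS, hxmax⟩ := S.exists_max_image (dist · c) hne
  set S' := {w ∈ S | dist c x < dist w x}
  have hxS' : x ∉ S' := by simp [S', dist_nonneg]
  have hS'S : S' ⊂ S := Finset.ssubset_iff_subset_ne.2 ⟨filter_subset _ S, fun h ↦ hxS' (h ▸ hxS)⟩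
  obtain ⟨T', hT'S', hcardT', hT'⟩ := ih S' hS'S ((coe_subset.2 hS'S.subset).trans hSV)
    fun y hy ↦ hS y (hS'S.subset hy)
  have hdiscard : #{w ∈ S | ¬ dist c x < dist w x} ≤ k := by
    simpa only [not_lt] using card_filter_dist_le_of_isKNNOf hVfin hdist (hSV hxS) (hS x hxS)
      S hSV fun hcS ↦ (hS c hcS).2.1 rfl
  have hfar : ∀ w ∈ T', max (dist x c) (dist w c) < dist x w := by
    intro w hw
    obtain ⟨hwS, hw⟩ := mem_filter.1 (hT'S' hw)
    rw [max_eq_left (hxmax w hwS), dist_comm x w, dist_comm x c]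
    exact hw
  refine ⟨insert x T', insert_subset hxS (hT'S'.trans hS'S.subset), ?_, ?_⟩
  · have hsplit : #S' + #{w ∈ S | ¬ dist c x < dist w x} = #S :=
      card_filter_add_card_filter_not _
    rw [card_insert_of_notMem fun h ↦ hxS' (hT'S' h), add_one_mul]
    omega
  · rw [coe_insert, Set.pairwise_insert]
    refine ⟨hT', fun w hw _ ↦ ⟨hfar w hw, ?_⟩⟩
    rw [max_comm, dist_comm w x]
    exact hfar w hw

end Greedy

theorem exists_separated_subset_general (d k m : ℕ)
    (V : Set (EuclideanSpace ℝ (Fin d))) (hVfin : V.Finite)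
    (hdist : DistinctDists V)
    (v : Fin m → EuclideanSpace ℝ (Fin d)) (hinj : Function.Injective v)
    (hvV : ∀ i, v i ∈ V ∧ v i ≠ 0)
    (hknn : ∀ i, IsKNNOf k V 0 (v i)) :
    ∃ (t : ℕ) (u : Fin t → EuclideanSpace ℝ (Fin d)), Function.Injective u ∧
      Set.range u ⊆ Set.range v ∧ m ≤ t * k ∧
      ∀ i j, i ≠ j → max ‖u i‖ ‖u j‖ < ‖u i - u j‖ := by
  classical
  obtain ⟨T, hTS, hcard, hT⟩ := exists_subset_pairwise_max_dist_lt hVfin hdist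
    (Finset.univ.image v) (by simpa [Set.subset_def] using fun i ↦ (hvV i).1)
    (by simpa using hknn)
  let u : Fin T.card → EuclideanSpace ℝ (Fin d) := fun i ↦ T.equivFin.symm i
  have hu : Function.Injective u := Subtype.val_injective.comp T.equivFin.symm.injective
  refine ⟨T.card, u, hu, ?_, ?_, fun i j hij ↦ ?_⟩
  · rintro _ ⟨i, rfl⟩
    simpa using hTS (T.equivFin.symm i).2
  · simpa [Finset.card_image_of_injective _ hinj] using hcard
  · simpa [dist_eq_norm] using hT (T.equivFin.symm i).2 (T.equivFin.symm j).2 (hu.ne hij)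

/-- If `v 1, …, v m` are distinct points of `V \ {0}` each having the origin among its `k`
nearest neighbors in `V`, then there is a subset `{u 1, …, u t}` of `{v 1, …, v m}` with
`m ≤ t·k` such that `‖u i − u j‖ > max ‖u i‖ ‖u j‖` for all `i ≠ j`. -/
theorem exists_separated_subset (d k m : ℕ) (hk : 1 ≤ k)
    (V : Set (EuclideanSpace ℝ (Fin d))) (hVfin : V.Finite)
    (h0 : (0 : EuclideanSpace ℝ (Fin d)) ∈ V) (hdist : DistinctDists V)
    (v : Fin m → EuclideanSpace ℝ (Fin d)) (hinj : Function.Injective v)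
    (hvV : ∀ i, v i ∈ V ∧ v i ≠ 0)
    (hknn : ∀ i, IsKNNOf k V 0 (v i)) :
    ∃ (t : ℕ) (u : Fin t → EuclideanSpace ℝ (Fin d)), Function.Injective u ∧
      Set.range u ⊆ Set.range v ∧ m ≤ t * k ∧
      ∀ i j, i ≠ j → max ‖u i‖ ‖u j‖ < ‖u i - u j‖ :=
  exists_separated_subset_general d k m V hVfin hdist v hinj hvV hknn
end

section
/- Let k ≥ 1 be an integer and let V be a finite set of points in ℝ^d in which all pairwise distances between distinct points are distinct. If a vertex v ∈ V has indegree m in the k-nearest-neighbor digraph kNND(V) (i.e., v is a k-nearest neighbor of exactly m points of V), then there exist t points a_1, …, a_t on the unit sphere of ℝ^d with ‖a_i − a_j‖ > 1 for all i ≠ j and with m ≤ t·k. In particular, every indegree in kNND(V) is at most κ'(d)·k, where κ'(d) is the maximum number of points on the unit sphere of ℝ^d with pairwise distances strictly greater than 1. -/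
/-- The indegree of `v` in the `k`NN digraph of `V`: the number of points of `V` having `v`
among their `k` nearest neighbors. -/
noncomputable def inDeg {d : ℕ} (k : ℕ) (V : Set (EuclideanSpace ℝ (Fin d)))
    (v : EuclideanSpace ℝ (Fin d)) : ℕ :=
  {u | u ∈ V ∧ IsKNNOf k V v u}.ncard

/-- `κ'(d)`: the maximum number of points on the unit sphere of `ℝ^d` with pairwise distances
strictly greater than `1`. -/
noncomputable def kappa' (d : ℕ) : ℕ :=
  sSup {t : ℕ | ∃ a : Fin t → EuclideanSpace ℝ (Fin d),
    (∀ i, ‖a i‖ = 1) ∧ ∀ i j, i ≠ j → 1 < ‖a i - a j‖}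

/-!
Let `S` be the set of in-neighbours of `v`. If `u, w ∈ S`, `w` is closer to `v` than `u`, and the
unit directions of `u - v` and `w - v` are at distance at most `1` (an angle of at most `60°` at
`v`), then `w` is closer to `u` than `v` is; as `v` is a `k`NN of `u`, fewer than `k` such `w`
exist. Greedily keep the point of `S` farthest from `v` and discard it together with every point
whose direction is within `60°` of it: each round discards at most `k` points, and the directions
of the kept points are unit vectors at pairwise distance greater than `1`.
-/

open Finset NormedSpace Metric

open Classical in
theorem Finset.exists_pairwise_not_rel_card_le_card_mul {α β : Type*} [LinearOrder β]
    {R : α → α → Prop} [Std.Symm R] (f : α → β) (k : ℕ) (S : Finset α)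
    (hf : Set.InjOn f S) (hdeg : ∀ u ∈ S, #{w ∈ S | R u w ∧ f w < f u} < k) :
    ∃ T ⊆ S, (T : Set α).Pairwise (fun a b => ¬ R a b) ∧ #S ≤ #T * k := by
  induction S using Finset.strongInduction with
  | H S ih =>
  obtain rfl | hne := S.eq_empty_or_nonempty
  · exact ⟨∅, by simp⟩
  obtain ⟨u, hu, hmax⟩ := S.exists_max_image f hne
  set S' := {w ∈ S | w ≠ u ∧ ¬ R u w}
  have hS'S : S' ⊆ S := filter_subset _ _
  obtain ⟨T, hTS', hT, hcard⟩ := ih S' (filter_ssubset.2 ⟨u, hu, by simp⟩) (hf.mono hS'S)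
    fun w hw => (card_le_card (filter_subset_filter _ hS'S)).trans_lt (hdeg w (hS'S hw))
  -- `u` has maximal rank, so all its `R`-neighbours in `S` are counted by `hdeg u`
  have hrest : S \ S' ⊆ insert u {w ∈ S | R u w ∧ f w < f u} := by
    intro w hw
    simp only [S', mem_sdiff, mem_filter, not_and, not_not] at hw
    by_cases hwu : w = u
    · exact hwu ▸ mem_insert_self _ _
    · exact mem_insert_of_mem (mem_filter.2 ⟨hw.1, hw.2 hw.1 hwu,
        (hmax w hw.1).lt_of_ne fun h => hwu (hf hw.1 hu h)⟩)
  have hSk : #S ≤ #S' + k := calc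
    #S = #(S \ S') + #S' := (card_sdiff_add_card_eq_card hS'S).symm
    _ ≤ #S' + k := by
      have := (card_le_card hrest).trans (card_insert_le _ _)
      have := hdeg u hu
      omega
  have huT : u ∉ T := fun h => (mem_filter.1 (hTS' h)).2.1 rfl
  refine ⟨insert u T, insert_subset hu (hTS'.trans hS'S), ?_, ?_⟩
  · rw [coe_insert, Set.pairwise_insert]
    refine ⟨hT, fun w hw _ => ⟨(mem_filter.1 (hTS' hw)).2.2, fun h => ?_⟩⟩
    exact (mem_filter.1 (hTS' hw)).2.2 (Std.Symm.symm _ _ h)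
  · rw [card_insert_of_notMem huT, add_mul, one_mul]
    omega

theorem norm_sub_lt_of_norm_normalize_sub_le_one {E : Type*} [NormedAddCommGroup E]
    [InnerProductSpace ℝ E] {x y : E} (hy : y ≠ 0) (hyx : ‖y‖ < ‖x‖)
    (h : ‖normalize x - normalize y‖ ≤ 1) : ‖x - y‖ < ‖x‖ := by
  have hx : x ≠ 0 := norm_pos_iff.1 ((norm_nonneg y).trans_lt hyx)
  have hcos : 1 ≤ 2 * inner ℝ (normalize x) (normalize y) := by
    have := norm_sub_sq_real (normalize x) (normalize y)
    rw [norm_normalize hx, norm_normalize hy] at this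
    nlinarith [norm_nonneg (normalize x - normalize y)]
  have hinner : inner ℝ x y = ‖x‖ * ‖y‖ * inner ℝ (normalize x) (normalize y) := by
    conv_lhs => rw [← norm_smul_normalize x, ← norm_smul_normalize y]
    rw [real_inner_smul_left, real_inner_smul_right, mul_assoc]
  have hypos : 0 < ‖y‖ := norm_pos_iff.2 hy
  refine lt_of_pow_lt_pow_left₀ 2 (norm_nonneg x) ?_
  rw [norm_sub_sq_real, hinner]
  nlinarith [mul_pos (mul_pos hypos hypos) (sub_pos.2 hyx), mul_pos hypos (sub_pos.2 hyx)]

theorem Metric.packingNumber_ne_top_of_isCompact {X : Type*} [PseudoEMetricSpace X]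
    {ε : NNReal} (hε : ε ≠ 0) {s : Set X} (hs : IsCompact s) : packingNumber ε s ≠ ⊤ := by
  obtain ⟨N, -, hN, hcover⟩ := exists_finite_isCover_of_isCompact (half_pos hε.bot_lt).ne' hs
  refine ne_top_of_le_ne_top hN.encard_lt_top.ne ?_
  calc packingNumber ε s = packingNumber (2 * (ε / 2)) s := by rw [mul_div_cancel₀ _ two_ne_zero]
    _ ≤ externalCoveringNumber (ε / 2) s := packingNumber_two_mul_le_externalCoveringNumber _ _
    _ ≤ N.encard := hcover.externalCoveringNumber_le_encard

theorem Metric.bddAbove_card_of_isSeparated_of_isCompact {X : Type*} [PseudoMetricSpace X]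
    {s : Set X} (hs : IsCompact s) {ε : ℝ} (hε : 0 < ε) :
    BddAbove {t : ℕ | ∃ a : Fin t → X, (∀ i, a i ∈ s) ∧ ∀ i j, i ≠ j → ε < dist (a i) (a j)} := by
  lift ε to NNReal using hε.le
  refine ⟨(packingNumber ε s).toNat, ?_⟩
  rintro t ⟨a, has, ha⟩
  have hinj : Function.Injective a := fun i j hij => by
    by_contra hne; simpa [hij] using (hε.trans (ha i j hne))
  have hsep : IsSeparated (ε : ENNReal) (Set.range a) := by
    rintro _ ⟨i, rfl⟩ _ ⟨j, rfl⟩ hij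
    rw [edist_dist, ← ENNReal.ofReal_coe_nnreal]
    exact (ENNReal.ofReal_lt_ofReal_iff_of_nonneg ε.2).2 (ha i j fun h => hij (h ▸ rfl))
  have hle : (t : ENat) ≤ packingNumber ε s := by
    simpa using hinj.encard_range.trans (hsep.encard_le_packingNumber (Set.range_subset_iff.2 has))
  exact ENat.toNat_natCast t ▸ ENat.toNat_le_toNat hle
    (packingNumber_ne_top_of_isCompact (by exact_mod_cast hε.ne') hs)

variable {d : ℕ}

theorem kappa'_bddAbove :
    BddAbove {t : ℕ | ∃ a : Fin t → EuclideanSpace ℝ (Fin d),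
      (∀ i, ‖a i‖ = 1) ∧ ∀ i j, i ≠ j → 1 < ‖a i - a j‖} :=
  (bddAbove_card_of_isSeparated_of_isCompact
    (isCompact_sphere (0 : EuclideanSpace ℝ (Fin d)) 1) one_pos).mono <| by
    rintro _ ⟨a, hnorm, hsep⟩
    exact ⟨a, by simpa using hnorm, by simpa [dist_eq_norm] using hsep⟩

theorem le_kappa' {t : ℕ} (a : Fin t → EuclideanSpace ℝ (Fin d)) (hnorm : ∀ i, ‖a i‖ = 1)
    (hsep : ∀ i j, i ≠ j → 1 < ‖a i - a j‖) : t ≤ kappa' d :=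
  le_csSup kappa'_bddAbove ⟨a, hnorm, hsep⟩

open Classical in
theorem IsKNNOf.card_filter_closer_lt {k : ℕ} {V : Set (EuclideanSpace ℝ (Fin d))}
    (hV : V.Finite) {u v : EuclideanSpace ℝ (Fin d)} (hvu : IsKNNOf k V v u)
    (S : Finset (EuclideanSpace ℝ (Fin d))) (hS : ∀ w ∈ S, w ∈ V ∧ w ≠ v) :
    #{w ∈ S | ‖normalize (u - v) - normalize (w - v)‖ ≤ 1 ∧ dist w v < dist u v} < k := by
  refine lt_of_le_of_lt ?_ hvu.2.2
  rw [← Set.ncard_coe_finset]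
  refine Set.ncard_le_ncard (fun w hw => ?_) (hV.subset fun w hw => hw.1)
  obtain ⟨hwS, hdir, hwu⟩ := mem_filter.1 hw
  refine ⟨(hS w hwS).1, fun h => (h ▸ hwu).false, ?_⟩
  have := norm_sub_lt_of_norm_normalize_sub_le_one (sub_ne_zero.2 (hS w hwS).2)
    (by simpa [dist_eq_norm] using hwu) hdir
  rwa [sub_sub_sub_cancel_right, ← dist_eq_norm, ← dist_eq_norm, dist_comm u, dist_comm u] at this

theorem indegree_le_kappa_mul_general (d k : ℕ)
    (V : Set (EuclideanSpace ℝ (Fin d))) (hVfin : V.Finite) (hdist : DistinctDists V)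
    (v : EuclideanSpace ℝ (Fin d)) (hv : v ∈ V) (m : ℕ) (hm : inDeg k V v = m) :
    (∃ (t : ℕ) (a : Fin t → EuclideanSpace ℝ (Fin d)),
      (∀ i, ‖a i‖ = 1) ∧ (∀ i j, i ≠ j → 1 < ‖a i - a j‖) ∧ m ≤ t * k) ∧
    m ≤ kappa' d * k := by
  have hSfin : {u | u ∈ V ∧ IsKNNOf k V v u}.Finite := hVfin.subset fun _ hu => hu.1
  set S := hSfin.toFinset
  have hS : ∀ u ∈ S, u ∈ V ∧ IsKNNOf k V v u := fun u => hSfin.mem_toFinset.1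
  have hSV : ∀ u ∈ S, u ∈ V ∧ u ≠ v := fun u hu => ⟨(hS u hu).1, (hS u hu).2.2.1.symm⟩
  have hinj : Set.InjOn (dist · v) S := fun a ha b hb hab =>
    (hdist a v b v (hSV a ha).1 hv (hSV b hb).1 hv (hSV a ha).2 (hSV b hb).2 hab).elim
      And.left fun h => absurd h.1 (hSV a ha).2
  let R u w := ‖normalize (u - v) - normalize (w - v)‖ ≤ 1
  have : Std.Symm R := ⟨fun _ _ h => (norm_sub_rev _ _).trans_le h⟩
  obtain ⟨T, hTS, hT, hcard⟩ := S.exists_pairwise_not_rel_card_le_card_mul (R := R) (dist · v) k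
    hinj fun u hu => (hS u hu).2.card_filter_closer_lt hVfin S hSV
  let a i := normalize ((T.equivFin.symm i : EuclideanSpace ℝ (Fin d)) - v)
  have ha_norm : ∀ i, ‖a i‖ = 1 := fun i =>
    norm_normalize (sub_ne_zero.2 (hSV _ (hTS (T.equivFin.symm i).2)).2)
  have ha_sep : ∀ i j, i ≠ j → 1 < ‖a i - a j‖ := fun i j hij =>
    not_le.1 (hT (T.equivFin.symm i).2 (T.equivFin.symm j).2 (by simpa [Subtype.ext_iff] using hij))
  have hm_le : m ≤ #T * k := by
    rwa [← hm, inDeg, Set.ncard_eq_toFinset_card _ hSfin]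
  exact ⟨⟨#T, a, ha_norm, ha_sep, hm_le⟩,
    hm_le.trans (Nat.mul_le_mul_right k (le_kappa' a ha_norm ha_sep))⟩

/-- If a vertex `v` of the `k`NN digraph of `V` has indegree `m`, then there are `t` points on
the unit sphere with pairwise distances `> 1` and `m ≤ t·k`; in particular `m ≤ κ'(d)·k`. -/
theorem indegree_le_kappa_mul (d k : ℕ) (hk : 1 ≤ k)
    (V : Set (EuclideanSpace ℝ (Fin d))) (hVfin : V.Finite) (hdist : DistinctDists V)
    (v : EuclideanSpace ℝ (Fin d)) (hv : v ∈ V) (m : ℕ) (hm : inDeg k V v = m) :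
    (∃ (t : ℕ) (a : Fin t → EuclideanSpace ℝ (Fin d)),
      (∀ i, ‖a i‖ = 1) ∧ (∀ i j, i ≠ j → 1 < ‖a i - a j‖) ∧ m ≤ t * k) ∧
    m ≤ kappa' d * k :=
  indegree_le_kappa_mul_general d k V hVfin hdist v hv m hm
end

section
/- Let k, t ≥ 1 be integers and suppose there exist t points on the unit sphere of ℝ^d with pairwise distances strictly greater than 1. Then for every integer j with 0 ≤ j ≤ t·k and every integer n ≥ k(t+1)+2, there exists a set V of n points in ℝ^d, with all pairwise distances between distinct points distinct, such that some vertex of the k-nearest-neighbor digraph kNND(V) has indegree exactly j; that is, Q_j^{(k)}(V) > 0. -/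
/-
Put a centre at the origin, `j` cluster points on the unit vectors `a s` (at most `k` on each),
and the remaining `n - j - 1 ≥ k + 1` filler points all at `3 • a i₀`; then move every point by
less than `δ` into general position, which is possible because the forbidden set (perpendicular
bisectors, and spheres whose radius is an existing distance) is Lebesgue-null. Strict comparisons
between target distances with slack `4δ` survive the move. For a cluster point the centre is at
distance `≈ 1`, and every point other than the at most `k - 1` of its own direction is farther,
because distinct directions are more than `1` apart; so the centre is among its `k` nearest
neighbours. A filler has at least `k` other fillers within `2δ` and the centre at distance `≈ 3`,
so its `k` nearest neighbours miss the centre. Hence the centre has indegree exactly `j`.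
-/

open Set Metric MeasureTheory Filter Topology Function

lemma exists_pos_forall_add_lt {ι : Type*} [Finite ι] {P : ι → Prop} {f : ι → ℝ} {c : ℝ}
    (h : ∀ i, P i → c < f i) : ∃ ε > 0, ∀ i, P i → c + ε < f i := by
  have hi : ∀ i, ∀ᶠ ε in 𝓝 (0 : ℝ), P i → c + ε < f i := fun i => by
    by_cases hPi : P i
    · filter_upwards [eventually_lt_nhds (sub_pos.2 (h i hPi))] with ε hε _
      linarith
    · exact .of_forall fun _ h => absurd h hPi
  obtain ⟨ε, hε, hε₀⟩ := (((eventually_all.2 hi).filter_mono nhdsWithin_le_nhds).and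
    (eventually_mem_nhdsWithin (s := Ioi (0 : ℝ)))).exists
  exact ⟨ε, hε₀, hε⟩

lemma dist_lt_dist_of_forall_dist_lt {X ι : Type*} [PseudoMetricSpace X] {p T : ι → X} {δ : ℝ}
    (hp : ∀ i, dist (p i) (T i) < δ) {i j i' j' : ι}
    (h : dist (T i) (T j) + 4 * δ ≤ dist (T i') (T j')) :
    dist (p i) (p j) < dist (p i') (p j') := by
  have h₁ := abs_sub_le_iff.1 (dist_dist_dist_le (p i) (p j) (T i) (T j))
  have h₂ := abs_sub_le_iff.1 (dist_dist_dist_le (p i') (p j') (T i') (T j'))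
  linarith [hp i, hp j, hp i', hp j']

lemma ncard_fiber_fst_le {κ α β : Type*} [Finite β] {e : κ → α × β} (he : Injective e) (s : α) :
    {m | (e m).1 = s}.ncard ≤ Nat.card β := by
  rw [← ncard_univ]
  refine ncard_le_ncard_of_injOn (fun m => (e m).2) (fun _ _ => mem_univ _) ?_
  intro m hm m' hm' h
  exact he (Prod.ext (hm.trans hm'.symm) h)

section Euclidean

variable {d : ℕ}

lemma exists_generic_point [Nontrivial (EuclideanSpace ℝ (Fin d))]
    {V : Set (EuclideanSpace ℝ (Fin d))} (hV : V.Finite) (x : EuclideanSpace ℝ (Fin d))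
    {δ : ℝ} (hδ : 0 < δ) :
    ∃ q, dist q x < δ ∧ (∀ y ∈ V, ∀ z ∈ V, dist q y = dist q z → y = z) ∧
      ∀ y ∈ V, ∀ u ∈ V, ∀ v ∈ V, dist q y ≠ dist u v := by
  set B := (⋃ y ∈ V, ⋃ z ∈ V, ⋃ (_ : y ≠ z), (AffineSubspace.perpBisector y z : Set _)) ∪
    ⋃ y ∈ V, ⋃ u ∈ V, ⋃ v ∈ V, sphere y (dist u v)
  have hB : volume B = 0 := by
    refine measure_union_null ?_ ?_ <;>
      simp only [measure_biUnion_null_iff hV.countable, measure_iUnion_null_iff]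
    · intro y _ z _ hyz
      exact Measure.addHaar_affineSubspace _ _ (AffineSubspace.perpBisector_eq_top.not.2 hyz)
    · intro y _ u _ v _
      exact Measure.addHaar_sphere _ _ _
  obtain ⟨q, hqx, hqB⟩ : (ball x δ \ B).Nonempty := nonempty_of_measure_ne_zero <| by
    rw [measure_sdiff_null hB]; exact (measure_ball_pos _ x hδ).ne'
  simp only [B, mem_union, mem_iUnion, not_or, not_exists] at hqB
  refine ⟨q, hqx, fun y hy z hz h => ?_, fun y hy u hu v hv h => hqB.2 y hy u hu v hv h⟩
  by_contra hyz
  exact hqB.1 y hy z hz hyz (AffineSubspace.mem_perpBisector_iff_dist_eq.2 h)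

lemma DistinctDists.insert {V : Set (EuclideanSpace ℝ (Fin d))} (hV : DistinctDists V)
    {q : EuclideanSpace ℝ (Fin d)}
    (h₁ : ∀ y ∈ V, ∀ z ∈ V, dist q y = dist q z → y = z)
    (h₂ : ∀ y ∈ V, ∀ u ∈ V, ∀ v ∈ V, dist q y ≠ dist u v) :
    DistinctDists (insert q V) := by
  unfold DistinctDists at hV
  intro u v u' v' hu hv hu' hv' huv hu'v' hd
  rcases hu with rfl | hu <;> rcases hv with rfl | hv <;> rcases hu' with rfl | hu' <;>
    rcases hv' with rfl | hv' <;> grind [dist_comm]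

lemma exists_perturbation_distinctDists [Nontrivial (EuclideanSpace ℝ (Fin d))] {δ : ℝ}
    (hδ : 0 < δ) (ι : Type*) [Finite ι] (T : ι → EuclideanSpace ℝ (Fin d)) :
    ∃ p : ι → EuclideanSpace ℝ (Fin d),
      (∀ i, dist (p i) (T i) < δ) ∧ Injective p ∧ DistinctDists (range p) := by
  revert T
  induction ι using Finite.induction_empty_option with
  | of_equiv e ih =>
    intro T
    obtain ⟨p, hpT, hp, hV⟩ := ih (T ∘ e)
    refine ⟨p ∘ e.symm, fun i => by simpa using hpT (e.symm i), hp.comp e.symm.injective, ?_⟩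
    rwa [e.symm.surjective.range_comp]
  | h_empty =>
    intro T
    refine ⟨T, (·.elim), (·.elim), ?_⟩
    rw [range_eq_empty]
    intro u _ _ _ hu
    exact hu.elim
  | h_option ih =>
    intro T
    obtain ⟨p, hpT, hp, hV⟩ := ih (T ∘ some)
    obtain ⟨q, hqT, hq₁, hq₂⟩ := exists_generic_point (finite_range p) (T none) hδ
    refine ⟨fun o => o.elim q p, ?_, ?_, ?_⟩
    · rintro (_ | i)
      exacts [hqT, hpT i]
    · exact Option.injective_iff.2 ⟨hp, fun h => hq₂ q h q h q h rfl⟩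
    · rw [Option.range_elim]
      exact hV.insert hq₁ hq₂

section KNN

variable {ι : Type*} {p : ι → EuclideanSpace ℝ (Fin d)}

lemma isKNNOf_range_iff (hp : Injective p) (k : ℕ) (c i : ι) :
    IsKNNOf k (range p) (p c) (p i) ↔
      c ≠ i ∧ {i' | i' ≠ i ∧ dist (p i') (p i) < dist (p c) (p i)}.ncard < k := by
  have : {w | w ∈ range p ∧ w ≠ p i ∧ dist w (p i) < dist (p c) (p i)} =
      p '' {i' | i' ≠ i ∧ dist (p i') (p i) < dist (p c) (p i)} := by
    ext w
    constructor
    · rintro ⟨⟨i', rfl⟩, hne, hlt⟩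
      exact ⟨i', ⟨fun h => hne (h ▸ rfl), hlt⟩, rfl⟩
    · rintro ⟨i', ⟨hne, hlt⟩, rfl⟩
      exact ⟨mem_range_self _, hp.ne hne, hlt⟩
  simp only [IsKNNOf, this, ncard_image_of_injective _ hp, hp.ne_iff, mem_range_self, true_and]

lemma inDeg_range (hp : Injective p) (k : ℕ) (c : ι) :
    inDeg k (range p) (p c) = {i | IsKNNOf k (range p) (p c) (p i)}.ncard := by
  rw [inDeg, ← ncard_image_of_injective _ hp]
  congr 1
  ext w
  constructor
  · rintro ⟨⟨i, rfl⟩, h⟩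
    exact ⟨i, h, rfl⟩
  · rintro ⟨i, h, rfl⟩
    exact ⟨mem_range_self _, h⟩

end KNN

section Star

variable {t k : ℕ} {κ φ : Type*}

def starTarget (a : Fin t → EuclideanSpace ℝ (Fin d)) (dir : κ → Fin t) (i₀ : Fin t) :
    Option (κ ⊕ φ) → EuclideanSpace ℝ (Fin d)
  | none => 0
  | some (.inl m) => a (dir m)
  | some (.inr _) => (3 : ℝ) • a i₀

variable {a : Fin t → EuclideanSpace ℝ (Fin d)} {dir : κ → Fin t} {i₀ : Fin t} {δ : ℝ}
  {p : Option (κ ⊕ φ) → EuclideanSpace ℝ (Fin d)}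

lemma isKNNOf_starTarget_cluster [Finite κ] [Finite φ] (hp : Injective p)
    (hpT : ∀ i, dist (p i) (starTarget a dir i₀ i) < δ) (ha : ∀ i, ‖a i‖ = 1)
    (hsep : ∀ i j, i ≠ j → 1 + 4 * δ ≤ ‖a i - a j‖) (hδ : δ ≤ 1 / 4)
    (hdir : ∀ s, {m | dir m = s}.ncard ≤ k) (m : κ) :
    IsKNNOf k (range p) (p none) (p (some (.inl m))) := by
  rw [isKNNOf_range_iff hp]
  refine ⟨Option.some_ne_none _ |>.symm, ?_⟩
  have hcloser : {i | i ≠ some (.inl m) ∧ dist (p i) (p (some (.inl m))) <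
      dist (p none) (p (some (.inl m)))} ⊆ (some ∘ .inl) '' ({m' | dir m' = dir m} \ {m}) := by
    rintro (_ | m' | f) ⟨hne, hlt⟩
    · exact absurd hlt (lt_irrefl _)
    · by_cases h : dir m' = dir m
      · exact ⟨m', ⟨h, by simpa using hne⟩, rfl⟩
      · refine absurd hlt (lt_asymm (dist_lt_dist_of_forall_dist_lt hpT ?_))
        simp only [starTarget, dist_eq_norm, zero_sub, norm_neg, ha]
        linarith [hsep _ _ h]
    · refine absurd hlt (lt_asymm (dist_lt_dist_of_forall_dist_lt hpT ?_))
      have := norm_sub_norm_le ((3 : ℝ) • a i₀) (a (dir m))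
      simp only [starTarget, dist_eq_norm, zero_sub, norm_neg, norm_smul, ha, Real.norm_ofNat,
        mul_one] at this ⊢
      linarith
  calc _ ≤ _ := ncard_le_ncard hcloser
    _ = ({m' | dir m' = dir m} \ {m}).ncard :=
      ncard_image_of_injective _ ((Option.some_injective _).comp Sum.inl_injective)
    _ < {m' | dir m' = dir m}.ncard := ncard_sdiff_singleton_lt_of_mem rfl
    _ ≤ k := hdir _

lemma not_isKNNOf_starTarget_filler [Finite κ] [Finite φ] (hp : Injective p)
    (hpT : ∀ i, dist (p i) (starTarget a dir i₀ i) < δ) (ha : ‖a i₀‖ = 1) (hδ : δ ≤ 1 / 4)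
    (hφ : k < Nat.card φ) (f : φ) :
    ¬ IsKNNOf k (range p) (p none) (p (some (.inr f))) := by
  rw [isKNNOf_range_iff hp, not_and, not_lt]
  intro _
  have hcloser : (some ∘ .inr) '' ({f}ᶜ : Set φ) ⊆ {i | i ≠ some (.inr f) ∧
      dist (p i) (p (some (.inr f))) < dist (p none) (p (some (.inr f)))} := by
    rintro _ ⟨f', hf', rfl⟩
    refine ⟨by simpa using hf', dist_lt_dist_of_forall_dist_lt hpT ?_⟩
    simp only [comp_apply, starTarget, dist_self, dist_zero_left, norm_smul, ha, Real.norm_ofNat,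
      mul_one]
    linarith
  calc k ≤ Nat.card φ - 1 := by omega
    _ = ({f}ᶜ : Set φ).ncard := by rw [ncard_compl, ncard_singleton]
    _ = _ := (ncard_image_of_injective _ ((Option.some_injective _).comp Sum.inr_injective)).symm
    _ ≤ _ := ncard_le_ncard hcloser

lemma inDeg_starTarget [Finite κ] [Finite φ] (hp : Injective p)
    (hpT : ∀ i, dist (p i) (starTarget a dir i₀ i) < δ) (ha : ∀ i, ‖a i‖ = 1)
    (hsep : ∀ i j, i ≠ j → 1 + 4 * δ ≤ ‖a i - a j‖) (hδ : δ ≤ 1 / 4)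
    (hdir : ∀ s, {m | dir m = s}.ncard ≤ k) (hφ : k < Nat.card φ) :
    inDeg k (range p) (p none) = Nat.card κ := by
  have : {i | IsKNNOf k (range p) (p none) (p i)} = range (some ∘ .inl) := by
    ext (_ | m | f)
    · simp [isKNNOf_range_iff hp]
    · simpa using isKNNOf_starTarget_cluster hp hpT ha hsep hδ hdir m
    · simpa using not_isKNNOf_starTarget_filler hp hpT (ha i₀) hδ hφ f
  rw [inDeg_range hp, this,
    ncard_range_of_injective ((Option.some_injective _).comp Sum.inl_injective)]

end Star

end Euclidean

theorem exists_config_with_indegree_general (d k t : ℕ) (ht : 1 ≤ t)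
    (a : Fin t → EuclideanSpace ℝ (Fin d))
    (ha1 : ∀ i, ‖a i‖ = 1) (ha : ∀ i j, i ≠ j → 1 < ‖a i - a j‖) :
    ∀ j ≤ t * k, ∀ n, k * (t + 1) + 2 ≤ n →
      ∃ V : Set (EuclideanSpace ℝ (Fin d)), V.Finite ∧ V.ncard = n ∧
        DistinctDists V ∧ ∃ v ∈ V, inDeg k V v = j := by
  intro j hj n hn
  have hjn : j + k + 2 ≤ n := by rw [Nat.mul_succ, mul_comm] at hn; omega
  let i₀ : Fin t := ⟨0, ht⟩
  have : Nontrivial (EuclideanSpace ℝ (Fin d)) := ⟨a i₀, 0, fun h => by simpa [h] using ha1 i₀⟩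
  obtain ⟨ε, hε, hsep⟩ := exists_pos_forall_add_lt (ι := Fin t × Fin t) fun q hq => ha q.1 q.2 hq
  set δ := min (ε / 4) (1 / 4)
  have hsep' : ∀ i i', i ≠ i' → 1 + 4 * δ ≤ ‖a i - a i'‖ := fun i i' h => by
    linarith [hsep (i, i') h, min_le_left (ε / 4) (1 / 4)]
  let e : Fin j → Fin t × Fin k := finProdFinEquiv.symm ∘ Fin.castLE hj
  have he : Injective e := finProdFinEquiv.symm.injective.comp (Fin.castLE_injective hj)
  obtain ⟨p, hpT, hp, hV⟩ := exists_perturbation_distinctDists (by positivity : 0 < δ)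
    (Option (Fin j ⊕ Fin (n - j - 1))) (starTarget a (fun m => (e m).1) i₀)
  refine ⟨range p, finite_range p, ?_, hV, p none, mem_range_self _, ?_⟩
  · rw [ncard_range_of_injective hp, Nat.card_eq_fintype_card, Fintype.card_option,
      Fintype.card_sum, Fintype.card_fin, Fintype.card_fin]
    omega
  · rw [inDeg_starTarget hp hpT ha1 hsep' (min_le_right _ _)
      (fun s => (ncard_fiber_fst_le he s).trans (Nat.card_fin k).le) (by rw [Nat.card_fin]; omega),
      Nat.card_fin]

/-- If there are `t` points on the unit sphere of `ℝ^d` with pairwise distances `> 1`, then for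
every `0 ≤ j ≤ t·k` and every `n ≥ k(t+1)+2` there is a set `V` of `n` points with distinct
pairwise distances whose `k`NN digraph has a vertex of indegree exactly `j`. -/
theorem exists_config_with_indegree (d k t : ℕ) (hk : 1 ≤ k) (ht : 1 ≤ t)
    (a : Fin t → EuclideanSpace ℝ (Fin d))
    (ha1 : ∀ i, ‖a i‖ = 1) (ha : ∀ i j, i ≠ j → 1 < ‖a i - a j‖) :
    ∀ j ≤ t * k, ∀ n, k * (t + 1) + 2 ≤ n →
      ∃ V : Set (EuclideanSpace ℝ (Fin d)), V.Finite ∧ V.ncard = n ∧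
        DistinctDists V ∧ ∃ v ∈ V, inDeg k V v = j :=
  exists_config_with_indegree_general d k t ht a ha1 ha
end

section
/- Let V be a finite set of at least two points in ℝ^d in which all pairwise distances between distinct points are distinct, and let G be the underlying graph of the 1-nearest-neighbor digraph of V (vertices V, with u and v adjacent iff NN(u) = v or NN(v) = u). Then every connected component of G contains exactly one reflexive pair, i.e., exactly one unordered pair {u, v} with NN(u) = v and NN(v) = u. -/
/-- `IsNN V v u` : `u` is the (unique) nearest neighbor of `v` in `V`, i.e. `NN(v) = u`. -/
def IsNN {d : ℕ} (V : Set (EuclideanSpace ℝ (Fin d))) (v u : EuclideanSpace ℝ (Fin d)) : Prop :=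
  u ∈ V ∧ u ≠ v ∧ ∀ w ∈ V, w ≠ v → w ≠ u → dist v u < dist v w

/-- The underlying graph of the 1-nearest-neighbor digraph of `V`: vertices are the points of
`V`, and `u`, `v` are adjacent iff `NN(u) = v` or `NN(v) = u`. -/
def nnGraph {d : ℕ} (V : Set (EuclideanSpace ℝ (Fin d))) : SimpleGraph V where
  Adj a b := IsNN V a.1 b.1 ∨ IsNN V b.1 a.1
  symm := ⟨fun a b h => Or.symm h⟩
  loopless := ⟨fun a h => by
    rcases h with h | h <;> exact h.2.1 rfl⟩

/-!
Every point `x` has a nearest neighbour `nn x`, and `G` is the graph of the map `nn`. A component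
contains a reflexive pair: at the point `u` of the component minimising `dist x (nn x)`, the point
`v = nn u` has no neighbour closer than `u`, so `nn v = u`. It contains only one: the set
`{x | ∃ n, nn^[n] x ∈ {u, v}}` is closed under adjacency, so the orbit of any point of the component
eventually enters `{u, v}`, while the orbit of a point of another reflexive pair `{u', v'}` never
leaves `{u', v'}`; hence the two pairs meet, and a pair is determined by any of its points.
-/

open Set Function

section FunctionalGraph

variable {α : Type*} {G : SimpleGraph α} {f : α → α}

theorem exists_iterate_mem_of_adj {s : Set α} (hG : ∀ a b, G.Adj a b → f a = b ∨ f b = a)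
    (hs : MapsTo f s s) {a b : α} (hab : G.Adj a b) (ha : ∃ n, f^[n] a ∈ s) :
    ∃ n, f^[n] b ∈ s := by
  obtain ⟨n, hn⟩ := ha
  rcases hG a b hab with rfl | rfl
  · exact ⟨n, by rw [← iterate_succ_apply, iterate_succ_apply']; exact hs hn⟩
  · exact ⟨n + 1, by rwa [iterate_succ_apply]⟩

theorem exists_iterate_mem_of_reachable {s : Set α} (hG : ∀ a b, G.Adj a b → f a = b ∨ f b = a)
    (hs : MapsTo f s s) {a b : α} (ha : a ∈ s) (hab : G.Reachable a b) : ∃ n, f^[n] b ∈ s := by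
  obtain ⟨p⟩ := hab
  suffices ∀ {x y : α}, G.Walk x y → (∃ n, f^[n] x ∈ s) → ∃ n, f^[n] y ∈ s from this p ⟨0, ha⟩
  intro x y p
  induction p with
  | nil => exact id
  | cons hxz _ ih => exact fun hx => ih (exists_iterate_mem_of_adj hG hs hxz hx)

theorem mapsTo_pair_of_swap {u v : α} (huv : f u = v) (hvu : f v = u) :
    MapsTo f {u, v} {u, v} := by
  rintro x (rfl | rfl)
  · simp [huv]
  · simp [hvu]

theorem sym2_mk_apply_eq_of_swap {u v w : α} (huv : f u = v) (hvu : f v = u)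
    (hw : w ∈ ({u, v} : Set α)) : s(w, f w) = s(u, v) := by
  rcases hw with rfl | rfl
  · rw [huv]
  · rw [hvu, Sym2.eq_swap]

theorem sym2_eq_of_swap_of_reachable (hG : ∀ a b, G.Adj a b → f a = b ∨ f b = a)
    {u v u' v' : α} (huv : f u = v) (hvu : f v = u) (huv' : f u' = v') (hvu' : f v' = u')
    (hreach : G.Reachable u u') : s(u, v) = s(u', v') := by
  obtain ⟨n, hn⟩ :=
    exists_iterate_mem_of_reachable hG (mapsTo_pair_of_swap huv hvu) (by simp) hreach
  have hn' : f^[n] u' ∈ ({u', v'} : Set α) := (mapsTo_pair_of_swap huv' hvu').iterate n (by simp)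
  rw [← sym2_mk_apply_eq_of_swap huv hvu hn, sym2_mk_apply_eq_of_swap huv' hvu' hn']

end FunctionalGraph

theorem apply_apply_eq_of_forall_dist_le {α : Type*} [PseudoMetricSpace α] {f : α → α}
    {S : Set α} {u : α} (hf : ∀ x y, y ≠ x → y ≠ f x → dist x (f x) < dist x y)
    (hfu : f u ≠ u) (hS : f u ∈ S) (hmin : ∀ x ∈ S, dist u (f u) ≤ dist x (f x)) :
    f (f u) = u := by
  by_contra h
  have hlt := hf (f u) u hfu.symm (Ne.symm h)
  have hle := hmin (f u) hS
  rw [dist_comm (f u) u] at hlt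
  linarith

section NearestNeighbor

variable {d : ℕ} {V : Set (EuclideanSpace ℝ (Fin d))}

theorem IsNN.unique {a b c : EuclideanSpace ℝ (Fin d)} (hb : IsNN V a b) (hc : IsNN V a c) :
    b = c := by
  by_contra h
  have h1 := hb.2.2 c hc.1 hc.2.1 (Ne.symm h)
  have h2 := hc.2.2 b hb.1 hb.2.1 h
  linarith

theorem exists_isNN (hfin : V.Finite) (h2 : 2 ≤ V.ncard) (hdist : DistinctDists V) (v : V) :
    ∃ u : V, IsNN V v u := by
  obtain ⟨u₀, hu₀, hne₀⟩ := exists_ne_of_one_lt_ncard (s := V) (by omega) v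
  obtain ⟨u, hu, hmin⟩ := exists_min_image (V \ {v.1}) (dist v.1)
    (hfin.subset sdiff_subset) ⟨u₀, hu₀, hne₀⟩
  refine ⟨⟨u, hu.1⟩, hu.1, hu.2, fun w hw hwv hwu => (hmin w ⟨hw, hwv⟩).lt_of_ne fun h => ?_⟩
  rcases hdist v u v w v.2 hu.1 v.2 hw (Ne.symm hu.2) (Ne.symm hwv) h with ⟨_, h'⟩ | ⟨h', _⟩
  · exact hwu h'.symm
  · exact hwv h'.symm

end NearestNeighbor

/-- Every connected component of the underlying graph of the 1NN digraph contains exactly one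
reflexive pair. -/
theorem component_unique_reflexive_pair (d : ℕ)
    (V : Set (EuclideanSpace ℝ (Fin d))) (hfin : V.Finite) (h2 : 2 ≤ V.ncard)
    (hdist : DistinctDists V) (c : (nnGraph V).ConnectedComponent) :
    ∃! p : Sym2 V, ∃ u v : V, p = Sym2.mk u v ∧ u ≠ v ∧
      IsNN V u.1 v.1 ∧ IsNN V v.1 u.1 ∧ (nnGraph V).connectedComponentMk u = c := by
  have : Finite V := hfin.to_subtype
  choose nn hnn using exists_isNN hfin h2 hdist
  have hnn_iff (x y : V) : IsNN V x y ↔ nn x = y :=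
    ⟨fun h => Subtype.ext ((hnn x).unique h), by rintro rfl; exact hnn x⟩
  have hadj (a b : V) (h : (nnGraph V).Adj a b) : nn a = b ∨ nn b = a := by
    rwa [← hnn_iff, ← hnn_iff]
  have hne (x : V) : nn x ≠ x := fun h => (hnn x).2.1 (congrArg Subtype.val h)
  obtain ⟨u, hu, hmin⟩ := exists_min_image c.supp (fun x => dist x (nn x))
    c.supp.toFinite c.nonempty_supp
  have hnn_mem : nn u ∈ c.supp := c.mem_supp_of_adj_mem_supp hu (Or.inl (hnn u))
  have hvu : nn (nn u) = u := apply_apply_eq_of_forall_dist_le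
    (fun x y hyx hyf => (hnn x).2.2 y y.2 (Subtype.coe_ne_coe.2 hyx) (Subtype.coe_ne_coe.2 hyf))
    (hne u) hnn_mem hmin
  refine ⟨s(u, nn u), ⟨u, nn u, rfl, (hne u).symm, hnn u, (hnn_iff _ _).2 hvu, hu⟩, ?_⟩
  rintro _ ⟨u', v', rfl, -, huv', hvu', hu'⟩
  exact (sym2_eq_of_swap_of_reachable hadj rfl hvu ((hnn_iff _ _).1 huv') ((hnn_iff _ _).1 hvu')
    (SimpleGraph.ConnectedComponent.exact (hu.trans hu'.symm))).symm
end

section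
/- Let a and b be integers with 1 ≤ b < a, and let V be a finite set of n points in ℝ^d in which all pairwise distances between distinct points are distinct. If n ≥ 2a + 14, then it is not possible that simultaneously Q_a^{(1)}(V) ≥ ⌊n/(a+1)⌋ and Q_b^{(1)}(V) ≥ ⌊n/(b+1)⌋; i.e., the 1NN digraph of V cannot have at least ⌊n/(a+1)⌋ vertices of indegree a and at least ⌊n/(b+1)⌋ vertices of indegree b. -/
/-- The indegree of `v` in the 1NN digraph of `V`: the number of `u ∈ V` with `NN(u) = v`. -/
noncomputable def inDeg1 {d : ℕ} (V : Set (EuclideanSpace ℝ (Fin d)))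
    (v : EuclideanSpace ℝ (Fin d)) : ℕ :=
  {u | u ∈ V ∧ IsNN V u v}.ncard

/-- `Q_j^{(1)}(V)`: the number of points of `V` with indegree exactly `j` in the 1NN digraph. -/
noncomputable def Q1j {d : ℕ} (V : Set (EuclideanSpace ℝ (Fin d))) (j : ℕ) : ℕ :=
  {v | v ∈ V ∧ inDeg1 V v = j}.ncard

open Finset

theorem sum_mul_card_fiber_le_sum {ι : Type*} (s : Finset ι) (t : Finset ℕ) (g : ι → ℕ) :
    ∑ j ∈ t, j * #{i ∈ s | g i = j} ≤ ∑ i ∈ s, g i := by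
  calc ∑ j ∈ t, j * #{i ∈ s | g i = j}
      = ∑ j ∈ t, ∑ i ∈ s with g i = j, j := by simp only [sum_const, smul_eq_mul, mul_comm]
    _ = ∑ i ∈ s with g i ∈ t, g i := sum_fiberwise_eq_sum_filter' s t g id
    _ ≤ ∑ i ∈ s, g i := sum_le_sum_of_subset (filter_subset _ s)

theorem sum_card_filter_le_card_of_rightUnique {α β : Type*} [DecidableEq α]
    (s : Finset α) (t : Finset β) {r : α → β → Prop} [∀ x y, Decidable (r x y)]
    (hr : Relator.RightUnique r) :
    ∑ y ∈ t, #{x ∈ s | r x y} ≤ #s := by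
  rw [← card_biUnion]
  · exact card_le_card (biUnion_subset.2 fun _ _ => filter_subset _ s)
  · intro y _ y' _ hne
    simp only [Function.onFun, disjoint_left, mem_filter]
    exact fun x hx hx' => hne (hr hx.2 hx'.2)

section NearestNeighbor

variable {d : ℕ}

theorem isNN_rightUnique (V : Set (EuclideanSpace ℝ (Fin d))) :
    Relator.RightUnique (IsNN V) := by
  intro v u u' hu hu'
  by_contra hne
  exact (hu.2.2 u' hu'.1 hu'.2.1 (Ne.symm hne)).asymm (hu'.2.2 u hu.1 hu.2.1 hne)

open Classical in
theorem inDeg1_coe_finset (S : Finset (EuclideanSpace ℝ (Fin d)))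
    (v : EuclideanSpace ℝ (Fin d)) :
    inDeg1 ↑S v = #{u ∈ S | IsNN ↑S u v} := by
  rw [inDeg1, ← Set.ncard_coe_finset, coe_filter]
  rfl

open Classical in
theorem Q1j_coe_finset (S : Finset (EuclideanSpace ℝ (Fin d))) (j : ℕ) :
    Q1j (S : Set (EuclideanSpace ℝ (Fin d))) j = #{v ∈ S | inDeg1 ↑S v = j} := by
  rw [Q1j, ← Set.ncard_coe_finset, coe_filter]
  rfl

theorem sum_inDeg1_le_card (S T : Finset (EuclideanSpace ℝ (Fin d))) :
    ∑ v ∈ T, inDeg1 ↑S v ≤ #S := by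
  classical
  simp only [inDeg1_coe_finset]
  exact sum_card_filter_le_card_of_rightUnique S T (isNN_rightUnique _)

theorem sum_mul_Q1j_le_ncard {V : Set (EuclideanSpace ℝ (Fin d))} (hV : V.Finite)
    (J : Finset ℕ) : ∑ j ∈ J, j * Q1j V j ≤ V.ncard := by
  classical
  obtain ⟨S, rfl⟩ := hV.exists_finset_coe
  simp only [Q1j_coe_finset, Set.ncard_coe_finset]
  exact (sum_mul_card_fiber_le_sum S J _).trans (sum_inDeg1_le_card S S)

end NearestNeighbor

theorem lt_mul_div_succ_add_mul_div_succ {a b n : ℕ} (hb : 1 ≤ b) (hba : b < a)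
    (hn : 2 * a + 14 ≤ n) : n < a * (n / (a + 1)) + b * (n / (b + 1)) := by
  have hqa : n + 1 ≤ (a + 1) * (n / (a + 1) + 1) := Nat.lt_mul_div_succ n a.succ_pos
  have hqb : n + 1 ≤ (b + 1) * (n / (b + 1) + 1) := Nat.lt_mul_div_succ n b.succ_pos
  generalize n / (a + 1) = qa at hqa ⊢
  generalize n / (b + 1) = qb at hqb ⊢
  zify at *
  -- `(a + 1) * qa ≥ n - a` and `(b + 1) * qb ≥ n - b` reduce the claim to this inequality
  have hslack : (a : ℤ) ^ 2 * (b + 1) + b ^ 2 * (a + 1) < n * (a * b - 1) := by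
    nlinarith [mul_nonneg (sub_nonneg.2 hb) (by linarith : (0 : ℤ) ≤ a - b - 1),
      mul_nonneg (by linarith : (0 : ℤ) ≤ a - b - 1) (by linarith : (0 : ℤ) ≤ a),
      mul_nonneg (sub_nonneg.2 hb) (by linarith : (0 : ℤ) ≤ b),
      mul_nonneg (by linarith : (0 : ℤ) ≤ n - 2 * a - 14)
        (by nlinarith : (0 : ℤ) ≤ a * b - 1)]
  have ha₀ : (0 : ℤ) ≤ a * (b + 1) := by positivity
  have hb₀ : (0 : ℤ) ≤ b * (a + 1) := by positivity
  nlinarith [mul_le_mul_of_nonneg_left hqa ha₀, mul_le_mul_of_nonneg_left hqb hb₀]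

theorem not_both_many_indegrees_general (d a b n : ℕ) (hb : 1 ≤ b) (hba : b < a)
    (V : Set (EuclideanSpace ℝ (Fin d))) (hfin : V.Finite) (hcard : V.ncard = n)
    (hn : 2 * a + 14 ≤ n) :
    ¬ (n / (a + 1) ≤ Q1j V a ∧ n / (b + 1) ≤ Q1j V b) := by
  rintro ⟨hQa, hQb⟩
  have hsum := sum_mul_Q1j_le_ncard hfin {a, b}
  rw [sum_pair hba.ne', hcard] at hsum
  have hlt := lt_mul_div_succ_add_mul_div_succ hb hba hn
  have hle : a * (n / (a + 1)) + b * (n / (b + 1)) ≤ a * Q1j V a + b * Q1j V b := by gcongr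
  omega

/-- For `1 ≤ b < a` and `n ≥ 2a + 14`, the 1NN digraph of an `n`-point set cannot
simultaneously have at least `⌊n/(a+1)⌋` vertices of indegree `a` and at least `⌊n/(b+1)⌋`
vertices of indegree `b`. -/
theorem not_both_many_indegrees (d a b n : ℕ) (hb : 1 ≤ b) (hba : b < a)
    (V : Set (EuclideanSpace ℝ (Fin d))) (hfin : V.Finite) (hcard : V.ncard = n)
    (hdist : DistinctDists V) (hn : 2 * a + 14 ≤ n) :
    ¬ (n / (a + 1) ≤ Q1j V a ∧ n / (b + 1) ≤ Q1j V b) :=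
  not_both_many_indegrees_general d a b n hb hba V hfin hcard hn
end

section
/- Let d ≥ 1, let B_0 ⊂ ℝ^d be a bounded Borel set with positive Lebesgue measure whose boundary has Lebesgue measure zero, and let n ≥ 6. Let U_1, …, U_n be independent random points each uniformly distributed on B_0 (law equal to the normalized restriction of Lebesgue measure to B_0). Almost surely all pairwise distances among U_1, …, U_n are distinct, so the random variables R = R^{(1)}({U_1,…,U_n}) (the number of reflexive nearest-neighbor pairs) and Q = Q^{(1)}({U_1,…,U_n}) (the number of shared nearest-neighbor triples) are almost surely well defined. Then R and Q are not independent random variables. -/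
open MeasureTheory ProbabilityTheory

/-- `R^{(1)}(V)`: the number of reflexive nearest-neighbor pairs of `V`. -/
noncomputable def reflCount {d : ℕ} (V : Set (EuclideanSpace ℝ (Fin d))) : ℕ :=
  {p : Sym2 (EuclideanSpace ℝ (Fin d)) | ∃ u v, p = s(u, v) ∧ u ≠ v ∧
    u ∈ V ∧ v ∈ V ∧ IsNN V u v ∧ IsNN V v u}.ncard

/-- `Q^{(1)}(V)`: the number of shared nearest-neighbor triples `({u,w}, v)` with `u ≠ w`,
`NN(u) = v` and `NN(w) = v`. -/
noncomputable def sharedCount1 {d : ℕ} (V : Set (EuclideanSpace ℝ (Fin d))) : ℕ :=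
  {q : Sym2 (EuclideanSpace ℝ (Fin d)) × EuclideanSpace ℝ (Fin d) |
    ∃ u w, q.1 = s(u, w) ∧ u ≠ w ∧ u ∈ V ∧ w ∈ V ∧ q.2 ∈ V ∧
      IsNN V u q.2 ∧ IsNN V w q.2}.ncard

/-! If `R ≥ ⌊n/2⌋`, the reflexive pairs are disjoint and cover all but at most one point. In a
shared triple `({u, w}, v)` the points `u` and `w` cannot both lie in reflexive pairs (both would be
the partner of `v`), so every shared triple contains the single uncovered point `x`, and is then
determined by it: `v = NN(x)` and the other point is `NN(v)`. Hence `R ≥ ⌊n/2⌋` forces `Q ≤ 1`.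

Both `{R ≥ ⌊n/2⌋}` and `{Q ≥ 2}` have positive probability: place the points in small balls
around well-separated points of the support of the law, in pairs for the first event and in two
triples plus singletons for the second (this needs `n ≥ 6`); within a triple with distinct
distances some two points share their nearest neighbour, since a nearest-neighbour 3-cycle is
impossible. Independence would give the intersection positive probability.

Distinct distances hold almost surely because, given `U i, U j, U k`, the event
`dist (U i) (U j) = dist (U k) (U l)` for a fourth index `l` puts `U l` on a sphere, which is null
for a law absolutely continuous with respect to Lebesgue measure. -/

section NearestNeighbor

variable {d : ℕ}

local notation "E" => EuclideanSpace ℝ (Fin d)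

def reflSet (V : Set E) : Set (Sym2 E) :=
  {p | ∃ u v, p = s(u, v) ∧ u ≠ v ∧ u ∈ V ∧ v ∈ V ∧ IsNN V u v ∧ IsNN V v u}

def sharedSet (V : Set E) : Set (Sym2 E × E) :=
  {q | ∃ u w, q.1 = s(u, w) ∧ u ≠ w ∧ u ∈ V ∧ w ∈ V ∧ q.2 ∈ V ∧
      IsNN V u q.2 ∧ IsNN V w q.2}

theorem reflCount_eq_ncard (V : Set E) : reflCount V = (reflSet V).ncard := rfl

theorem sharedCount1_eq_ncard (V : Set E) : sharedCount1 V = (sharedSet V).ncard := rfl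

theorem IsNN.unique_s19 {V : Set E} {u v w : E} (hv : IsNN V u v) (hw : IsNN V u w) : v = w := by
  by_contra hvw
  have := hv.2.2 w hw.1 hw.2.1 (Ne.symm hvw)
  have := hw.2.2 v hv.1 hv.2.1 hvw
  linarith

theorem IsNN.not_cycle {V : Set E} {a b c : E} (hab : IsNN V a b) (hbc : IsNN V b c)
    (hca : IsNN V c a) : False := by
  have := hab.2.2 c hbc.1 hca.2.1.symm hbc.2.1
  have := hbc.2.2 a hca.1 hab.2.1.symm hca.2.1
  have := hca.2.2 b hab.1 hbc.2.1.symm hab.2.1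
  rw [dist_comm b a, dist_comm c b, dist_comm a c] at *
  linarith

theorem DistinctDists.exists_isNN {V : Set E} (hV' : DistinctDists V) (hV : V.Finite) {v : E}
    (hv : v ∈ V) (hnt : ∃ w ∈ V, w ≠ v) : ∃ u, IsNN V v u := by
  obtain ⟨u, ⟨huV, huv⟩, hmin⟩ :=
    Set.exists_min_image (V \ {v}) (dist v) hV.sdiff (by simpa [Set.Nonempty] using hnt)
  refine ⟨u, huV, huv, fun w hwV hwv hwu => (hmin w ⟨hwV, hwv⟩).lt_of_ne fun h => hwu ?_⟩
  rcases hV' v u v w hv huV hv hwV (Ne.symm huv) (Ne.symm hwv) h with ⟨-, h⟩ | ⟨h, -⟩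
  · exact h.symm
  · exact absurd h.symm hwv

theorem exists_isNN_of_mem_reflSet {V : Set E} {p : Sym2 E} (hp : p ∈ reflSet V) {x : E}
    (hx : x ∈ p) : ∃ y, p = s(x, y) ∧ IsNN V x y ∧ IsNN V y x := by
  obtain ⟨u, v, rfl, -, -, -, huv, hvu⟩ := hp
  rcases Sym2.mem_iff.1 hx with rfl | rfl
  · exact ⟨v, rfl, huv, hvu⟩
  · exact ⟨u, Sym2.eq_swap, hvu, huv⟩

def mutualSet (V : Set E) : Set E := {x | ∃ y, IsNN V x y ∧ IsNN V y x}

theorem mutualSet_subset (V : Set E) : mutualSet V ⊆ V := fun _ ⟨_, _, hyx⟩ => hyx.1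

theorem reflSet_finite {V : Set E} (hV : V.Finite) : (reflSet V).Finite := by
  refine ((hV.prod hV).image fun z => s(z.1, z.2)).subset ?_
  rintro _ ⟨u, v, rfl, -, hu, hv, -⟩
  exact ⟨(u, v), ⟨hu, hv⟩, rfl⟩

theorem sharedSet_finite {V : Set E} (hV : V.Finite) : (sharedSet V).Finite := by
  refine (((hV.prod hV).image fun z => s(z.1, z.2)).prod hV).subset ?_
  rintro ⟨p, t⟩ ⟨u, w, hp, -, hu, hw, ht, -⟩
  exact ⟨⟨(u, w), ⟨hu, hw⟩, hp.symm⟩, ht⟩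

theorem two_mul_reflCount_le_ncard_mutualSet {V : Set E} (hV : V.Finite) :
    2 * reflCount V ≤ (mutualSet V).ncard := by
  have hfin := reflSet_finite hV
  have hdisj : (reflSet V).PairwiseDisjoint fun p => {x | x ∈ p} := by
    refine fun p hp q hq hpq => Set.disjoint_left.2 fun x hxp hxq => hpq ?_
    obtain ⟨y, rfl, hxy, -⟩ := exists_isNN_of_mem_reflSet hp hxp
    obtain ⟨z, rfl, hxz, -⟩ := exists_isNN_of_mem_reflSet hq hxq
    rw [hxy.unique_s19 hxz]
  have hcard : ∀ p ∈ reflSet V, {x | x ∈ p}.ncard = 2 := by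
    rintro _ ⟨u, v, rfl, huv, -⟩
    have hpair : {x | x ∈ s(u, v)} = {u, v} := by ext; simp [Sym2.mem_iff]
    rw [hpair, Set.ncard_pair huv]
  calc 2 * reflCount V = ∑ᶠ p ∈ reflSet V, {x | x ∈ p}.ncard := by
        rw [finsum_mem_congr rfl hcard, finsum_mem_eq_finite_toFinset_sum _ hfin,
          Finset.sum_const, smul_eq_mul, mul_comm, reflCount_eq_ncard,
          Set.ncard_eq_toFinset_card _ hfin]
    _ = (⋃ p ∈ reflSet V, {x | x ∈ p}).ncard :=
        (hfin.ncard_biUnion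
          (fun p hp => Set.finite_of_ncard_ne_zero (by rw [hcard p hp]; norm_num)) hdisj).symm
    _ ≤ (mutualSet V).ncard := by
        refine Set.ncard_le_ncard ?_ (hV.subset (mutualSet_subset V))
        simp only [Set.iUnion_subset_iff]
        intro p hp x hx
        obtain ⟨y, -, hxy, hyx⟩ := exists_isNN_of_mem_reflSet hp hx
        exact ⟨y, hxy, hyx⟩

theorem IsNN.symm_of_mem_mutualSet {V : Set E} {u t : E} (hu : u ∈ mutualSet V)
    (hut : IsNN V u t) : IsNN V t u := by
  obtain ⟨y, huy, hyu⟩ := hu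
  rwa [hut.unique_s19 huy]

theorem eq_of_isNN_of_mem_mutualSet {V : Set E} {u w t : E} (hu : IsNN V u t) (hw : IsNN V w t)
    (hu' : u ∈ mutualSet V) (hw' : w ∈ mutualSet V) : u = w :=
  (hu.symm_of_mem_mutualSet hu').unique_s19 (hw.symm_of_mem_mutualSet hw')

theorem sharedSet_subsingleton {V : Set E} (hV : (V \ mutualSet V).Subsingleton) :
    (sharedSet V).Subsingleton := by
  have key : ∀ q ∈ sharedSet V, ∃ x ∈ V \ mutualSet V, ∃ b, q.1 = s(x, b) ∧
      IsNN V x q.2 ∧ IsNN V q.2 b := by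
    rintro ⟨p, t⟩ ⟨u, w, hp, huw, huV, hwV, -, hu, hw⟩
    by_cases hum : u ∈ mutualSet V
    · have hwm : w ∉ mutualSet V := fun hwm => huw (eq_of_isNN_of_mem_mutualSet hu hw hum hwm)
      exact ⟨w, ⟨hwV, hwm⟩, u, hp.trans Sym2.eq_swap, hw, hu.symm_of_mem_mutualSet hum⟩
    · have hwm : w ∈ mutualSet V := by
        by_contra hwm
        exact huw (hV ⟨huV, hum⟩ ⟨hwV, hwm⟩)
      exact ⟨u, ⟨huV, hum⟩, w, hp, hu, hw.symm_of_mem_mutualSet hwm⟩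
  intro q hq q' hq'
  obtain ⟨x, hx, b, hqb, hxq, hqb'⟩ := key q hq
  obtain ⟨x', hx', b', hqb₁, hxq', hqb₁'⟩ := key q' hq'
  obtain rfl := hV hx hx'
  have ht : q.2 = q'.2 := hxq.unique_s19 hxq'
  rw [← ht] at hqb₁'
  exact Prod.ext (by rw [hqb, hqb₁, hqb'.unique_s19 hqb₁']) ht

theorem sharedCount1_le_one_of_ncard_le {V : Set E} (hV : V.Finite)
    (hcard : V.ncard ≤ 2 * reflCount V + 1) : sharedCount1 V ≤ 1 := by
  have hmut := two_mul_reflCount_le_ncard_mutualSet hV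
  have hdiff : (V \ mutualSet V).ncard ≤ 1 := by
    rw [Set.ncard_sdiff (mutualSet_subset V) (hV.subset (mutualSet_subset V))]
    omega
  rw [sharedCount1_eq_ncard, Set.ncard_le_one (sharedSet_finite hV)]
  exact sharedSet_subsingleton ((Set.ncard_le_one hV.sdiff).1 hdiff)

theorem exists_mem_sharedSet_of_triangle {V : Set E} {a b c : E} (ha : a ∈ V) (hb : b ∈ V)
    (hc : c ∈ V) (hab : a ≠ b) (hac : a ≠ c) (hbc : b ≠ c) (hna : IsNN V a b ∨ IsNN V a c)
    (hnb : IsNN V b a ∨ IsNN V b c) (hnc : IsNN V c a ∨ IsNN V c b) :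
    ∃ q ∈ sharedSet V, q.2 = a ∨ q.2 = b ∨ q.2 = c := by
  have mk : ∀ {x y t : E}, x ∈ V → y ∈ V → x ≠ y → IsNN V x t → IsNN V y t →
      (s(x, y), t) ∈ sharedSet V := fun hx hy hxy hxt hyt =>
    ⟨_, _, rfl, hxy, hx, hy, hxt.1, hxt, hyt⟩
  rcases hna with h₁ | h₁ <;> rcases hnb with h₂ | h₂ <;> rcases hnc with h₃ | h₃ <;>
    first
    | exact (h₁.not_cycle h₂ h₃).elim
    | exact (h₁.not_cycle h₃ h₂).elim
    | exact ⟨_, mk ha hb hab h₁ h₂, by simp⟩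
    | exact ⟨_, mk ha hc hac h₁ h₃, by simp⟩
    | exact ⟨_, mk hb hc hbc h₂ h₃, by simp⟩

end NearestNeighbor

def IsClusteredBy {X ι β : Type*} [PseudoMetricSpace X] (u : ι → X) (κ : ι → β) (ρ : ℝ) :
    Prop :=
  (∀ i j, κ i = κ j → dist (u i) (u j) < ρ) ∧ ∀ i j, κ i ≠ κ j → ρ ≤ dist (u i) (u j)

theorem IsClusteredBy.of_dist_lt {X ι β : Type*} [PseudoMetricSpace X] {u : ι → X}
    {κ : ι → β} {c : β → X} {r : ℝ} (hsep : ∀ i j, κ i ≠ κ j → r ≤ dist (c (κ i)) (c (κ j)))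
    (hu : ∀ i, dist (u i) (c (κ i)) < r / 4) : IsClusteredBy u κ (r / 2) := by
  refine ⟨fun i j hij => ?_, fun i j hij => ?_⟩
  · have := dist_triangle_right (u i) (u j) (c (κ i))
    have := hu i
    have := hu j
    rw [← hij] at this
    linarith
  · have := dist_triangle4 (c (κ i)) (u i) (u j) (c (κ j))
    have := hu i
    have := hu j
    have := hsep i j hij
    rw [dist_comm (c (κ i)) (u i)] at *
    linarith

namespace IsClusteredBy

variable {d : ℕ} {ι β : Type*} [Finite ι] {u : ι → EuclideanSpace ℝ (Fin d)} {κ : ι → β}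
  {ρ : ℝ}

theorem exists_isNN (hc : IsClusteredBy u κ ρ) (hinj : Function.Injective u)
    (hd : DistinctDists (Set.range u)) {i k : ι} (hki : k ≠ i) (hk : κ k = κ i) :
    ∃ j ≠ i, κ j = κ i ∧ IsNN (Set.range u) (u i) (u j) := by
  obtain ⟨_, hnn⟩ := hd.exists_isNN (Set.finite_range u) (Set.mem_range_self i)
    ⟨u k, Set.mem_range_self k, hinj.ne hki⟩
  obtain ⟨j, rfl⟩ := hnn.1
  refine ⟨j, fun h => hnn.2.1 (h ▸ rfl), ?_, hnn⟩
  by_contra hj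
  have := hnn.2.2 (u k) (Set.mem_range_self k) (hinj.ne hki)
    (hinj.ne fun h => hj (h ▸ hk))
  have := hc.1 i k hk.symm
  have := hc.2 i j (Ne.symm hj)
  linarith

theorem mk_mem_reflSet (hc : IsClusteredBy u κ ρ) (hinj : Function.Injective u)
    (hd : DistinctDists (Set.range u)) {i j : ι} (hij : i ≠ j)
    (hcl : ∀ t, κ t = κ i ↔ t = i ∨ t = j) : s(u i, u j) ∈ reflSet (Set.range u) := by
  have hji : κ j = κ i := (hcl j).2 (Or.inr rfl)
  have nn : ∀ x y, x ≠ y → κ x = κ i → κ y = κ i → IsNN (Set.range u) (u x) (u y) := by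
    intro x y hxy hx hy
    obtain ⟨z, hzx, hz, hxz⟩ := hc.exists_isNN hinj hd hxy.symm (hy.trans hx.symm)
    have hzy : z = y := by
      rcases (hcl z).1 (hz.trans hx) with rfl | rfl <;> rcases (hcl x).1 hx with rfl | rfl <;>
        rcases (hcl y).1 hy with rfl | rfl <;> tauto
    rwa [← hzy]
  exact ⟨u i, u j, rfl, hinj.ne hij, Set.mem_range_self i, Set.mem_range_self j,
    nn i j hij rfl hji, nn j i hij.symm hji rfl⟩

theorem exists_mem_sharedSet (hc : IsClusteredBy u κ ρ) (hinj : Function.Injective u)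
    (hd : DistinctDists (Set.range u)) {i j k : ι} (hij : i ≠ j) (hik : i ≠ k) (hjk : j ≠ k)
    (hcl : ∀ t, κ t = κ i ↔ t = i ∨ t = j ∨ t = k) :
    ∃ q ∈ sharedSet (Set.range u), ∃ t, q.2 = u t ∧ κ t = κ i := by
  have hj : κ j = κ i := (hcl j).2 (by simp)
  have hk : κ k = κ i := (hcl k).2 (by simp)
  have nn : ∀ x a b, a ≠ x → κ x = κ i → κ a = κ i →
      (∀ t, κ t = κ i → t = x ∨ t = a ∨ t = b) →
      IsNN (Set.range u) (u x) (u a) ∨ IsNN (Set.range u) (u x) (u b) := by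
    intro x a b hax hx ha hxab
    obtain ⟨y, hyx, hy, hxy⟩ := hc.exists_isNN hinj hd hax (ha.trans hx.symm)
    rcases hxab y (hy.trans hx) with rfl | rfl | rfl
    exacts [absurd rfl hyx, Or.inl hxy, Or.inr hxy]
  have hi := nn i j k hij.symm rfl hj fun t ht => (hcl t).1 ht
  have hj' := nn j i k hij hj rfl fun t ht => by have := (hcl t).1 ht; tauto
  have hk' := nn k i j hik hk rfl fun t ht => by have := (hcl t).1 ht; tauto
  obtain ⟨q, hq, hq₂⟩ := exists_mem_sharedSet_of_triangle (Set.mem_range_self i)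
    (Set.mem_range_self j) (Set.mem_range_self k) (hinj.ne hij) (hinj.ne hik) (hinj.ne hjk)
    hi hj' hk'
  rcases hq₂ with h | h | h
  exacts [⟨q, hq, i, h, rfl⟩, ⟨q, hq, j, h, hj⟩, ⟨q, hq, k, h, hk⟩]

end IsClusteredBy

section Configurations

variable {d n : ℕ} {u : Fin n → EuclideanSpace ℝ (Fin d)} {ρ : ℝ}

theorem half_le_reflCount_of_isClusteredBy_pairs (hinj : Function.Injective u)
    (hd : DistinctDists (Set.range u)) (hc : IsClusteredBy u (fun i => (i : ℕ) / 2) ρ) :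
    n / 2 ≤ reflCount (Set.range u) := by
  let pair : Fin (n / 2) → Sym2 (EuclideanSpace ℝ (Fin d)) :=
    fun t => s(u ⟨2 * t, by omega⟩, u ⟨2 * t + 1, by omega⟩)
  have hmem : ∀ t, pair t ∈ reflSet (Set.range u) := fun t =>
    hc.mk_mem_reflSet hinj hd (by simp [Fin.ext_iff]) fun s => by simp only [Fin.ext_iff]; omega
  have hpair : Function.Injective pair := by
    intro t t' h
    rcases Sym2.eq_iff.1 h with ⟨h, -⟩ | ⟨h, -⟩ <;>
      · have := congrArg Fin.val (hinj h)
        simp only at this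
        ext; omega
  calc n / 2 = (Set.univ : Set (Fin (n / 2))).ncard := by simp
    _ ≤ reflCount (Set.range u) :=
      Set.ncard_le_ncard_of_injOn pair (fun t _ => hmem t) hpair.injOn
        (reflSet_finite (Set.finite_range u))

theorem two_le_sharedCount1_of_isClusteredBy_triples (hn : 6 ≤ n) (hinj : Function.Injective u)
    (hd : DistinctDists (Set.range u))
    -- clusters `{0, 1, 2}`, `{3, 4, 5}` and singletons
    (hc : IsClusteredBy u (fun i => if (i : ℕ) < 6 then (i : ℕ) / 3 else i) ρ) :
    2 ≤ sharedCount1 (Set.range u) := by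
  have triple : ∀ a < 2, ∃ q ∈ sharedSet (Set.range u), ∃ t : Fin n, q.2 = u t ∧
      (if (t : ℕ) < 6 then (t : ℕ) / 3 else t) = a := by
    intro a ha
    obtain ⟨q, hq, t, ht, hκ⟩ := hc.exists_mem_sharedSet hinj hd
      (i := ⟨3 * a, by omega⟩) (j := ⟨3 * a + 1, by omega⟩) (k := ⟨3 * a + 2, by omega⟩)
      (by simp [Fin.ext_iff]) (by simp [Fin.ext_iff]) (by simp [Fin.ext_iff])
      fun s => by simp only [Fin.ext_iff]; split_ifs <;> omega
    exact ⟨q, hq, t, ht, by rw [hκ]; dsimp only; split_ifs <;> omega⟩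
  obtain ⟨q₀, hq₀, t₀, ht₀, hκ₀⟩ := triple 0 (by norm_num)
  obtain ⟨q₁, hq₁, t₁, ht₁, hκ₁⟩ := triple 1 (by norm_num)
  have hq : q₀ ≠ q₁ := fun h => by
    have : t₀ = t₁ := hinj (ht₀.symm.trans (h ▸ ht₁))
    rw [this, hκ₁] at hκ₀
    exact one_ne_zero hκ₀
  calc 2 = ({q₀, q₁} : Set _).ncard := (Set.ncard_pair hq).symm
    _ ≤ sharedCount1 (Set.range u) :=
      Set.ncard_le_ncard (Set.pair_subset hq₀ hq₁) (sharedSet_finite (Set.finite_range u))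

end Configurations

theorem injective_and_distinctDists_of_dist_ne_dist {d : ℕ} {ι : Type*} [Fintype ι]
    (hι : 2 < Fintype.card ι) {u : ι → EuclideanSpace ℝ (Fin d)}
    (h : ∀ i j k l, l ≠ i → l ≠ j → l ≠ k → dist (u i) (u j) ≠ dist (u k) (u l)) :
    Function.Injective u ∧ DistinctDists (Set.range u) := by
  classical
  have hinj : Function.Injective u := by
    intro a b hab
    by_contra hne
    obtain ⟨l, -, hl⟩ := Finset.exists_mem_notMem_of_card_lt_card
      (s := {a, b}) (t := Finset.univ) (Finset.card_le_two.trans_lt hι)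
    simp only [Finset.mem_insert, Finset.mem_singleton, not_or] at hl
    exact h l l a b (Ne.symm hl.2) (Ne.symm hl.2) (Ne.symm hne) (by simp [hab])
  refine ⟨hinj, ?_⟩
  rintro _ _ _ _ ⟨a, rfl⟩ ⟨b, rfl⟩ ⟨a', rfl⟩ ⟨b', rfl⟩ hab hab' hd
  by_cases hb' : b' ≠ a ∧ b' ≠ b ∧ b' ≠ a'
  · exact absurd hd (h a b a' b' hb'.1 hb'.2.1 hb'.2.2)
  by_cases ha' : a' ≠ a ∧ a' ≠ b ∧ a' ≠ b'
  · exact absurd (hd.trans (dist_comm _ _)) (h a b b' a' ha'.1 ha'.2.1 ha'.2.2)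
  grind

theorem Set.Finite.exists_pos_forall_le_dist {X : Type*} [MetricSpace X] {s : Set X}
    (hs : s.Finite) : ∃ r > 0, ∀ x ∈ s, ∀ y ∈ s, x ≠ y → r ≤ dist x y := by
  rcases s.offDiag.eq_empty_or_nonempty with h | h
  · exact ⟨1, one_pos, fun x hx y hy hxy =>
      (Set.eq_empty_iff_forall_notMem.1 h (x, y) ⟨hx, hy, hxy⟩).elim⟩
  · obtain ⟨p, ⟨-, -, hp⟩, hmin⟩ :=
      Set.exists_min_image _ (fun p : X × X => dist p.1 p.2) hs.offDiag h
    exact ⟨dist p.1 p.2, dist_pos.2 hp, fun x hx y hy hxy => hmin (x, y) ⟨hx, hy, hxy⟩⟩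

theorem MeasureTheory.Measure.support_infinite {X : Type*} [TopologicalSpace X]
    [MeasurableSpace X] [HereditarilyLindelofSpace X] {ν : Measure X} [NullSingletonClass ν]
    (hν : ν ≠ 0) : ν.support.Infinite := fun hfin =>
  hν <| Measure.measure_univ_eq_zero.1 <| by
    simpa using measure_union_null (hfin.measure_zero ν) ν.measure_compl_support

section Probability

variable {Ω E : Type*} [MeasurableSpace Ω] {μ : Measure Ω}
  [MetricSpace E] [MeasurableSpace E] [BorelSpace E]

theorem ProbabilityTheory.IndepFun.measure_dist_eq_zero [SecondCountableTopology E] {α : Type*}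
    [MeasurableSpace α] [IsProbabilityMeasure μ]
    {X : Ω → α} {Y : Ω → E} (hXY : IndepFun X Y μ) (hX : Measurable X) (hY : Measurable Y)
    (hY_sphere : ∀ x r, μ.map Y (Metric.sphere x r) = 0) {c : α → E} {r : α → ℝ}
    (hc : Measurable c) (hr : Measurable r) :
    μ {ω | dist (Y ω) (c (X ω)) = r (X ω)} = 0 := by
  have : IsProbabilityMeasure (μ.map X) := Measure.isProbabilityMeasure_map hX.aemeasurable
  have : IsProbabilityMeasure (μ.map Y) := Measure.isProbabilityMeasure_map hY.aemeasurable
  let A : Set (α × E) := {p | dist p.2 (c p.1) = r p.1}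
  have hA : MeasurableSet A := measurableSet_eq_fun (by fun_prop) (by fun_prop)
  calc μ {ω | dist (Y ω) (c (X ω)) = r (X ω)} = μ.map (fun ω => (X ω, Y ω)) A :=
        (Measure.map_apply (hX.prodMk hY) hA).symm
    _ = (μ.map X).prod (μ.map Y) A := by
        rw [(indepFun_iff_map_prod_eq_prod_map_map hX.aemeasurable hY.aemeasurable).1 hXY]
    _ = 0 := (Measure.measure_prod_null hA).2 (ae_of_all _ fun x => hY_sphere (c x) (r x))

variable {ι : Type*} {U : ι → Ω → E} {ν : Measure E}

theorem ProbabilityTheory.iIndepFun.ae_dist_ne_dist [SecondCountableTopology E]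
    [IsProbabilityMeasure μ] [Countable ι] (hindep : iIndepFun U μ)
    (hmeas : ∀ i, Measurable (U i)) (hlaw : ∀ i, μ.map (U i) = ν)
    (hν : ∀ x r, ν (Metric.sphere x r) = 0) :
    ∀ᵐ ω ∂μ, ∀ i j k l, l ≠ i → l ≠ j → l ≠ k →
      dist (U i ω) (U j ω) ≠ dist (U k ω) (U l ω) := by
  classical
  simp only [ae_all_iff]
  intro i j k l hli hlj hlk
  have hS : Disjoint ({i, j, k} : Finset ι) {l} := by
    simpa using ⟨hli, hlj, hlk⟩
  have hXY := (hindep.indepFun_finset _ _ hS hmeas).comp measurable_id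
    (measurable_pi_apply ⟨l, Finset.mem_singleton_self l⟩)
  have := hXY.measure_dist_eq_zero (Y := U l) (by fun_prop) (hmeas l) (by simpa [hlaw])
    (c := fun x => x ⟨k, by simp⟩) (r := fun x => dist (x ⟨i, by simp⟩) (x ⟨j, by simp⟩))
    (by fun_prop) (by fun_prop)
  filter_upwards [measure_eq_zero_iff_ae_notMem.1 this] with ω hω h
  exact hω (by simp [h, dist_comm])

theorem ProbabilityTheory.iIndepFun.measure_iInter_preimage_ball_pos [Fintype ι]
    (hindep : iIndepFun U μ)
    (hmeas : ∀ i, Measurable (U i)) (hlaw : ∀ i, μ.map (U i) = ν) {c : ι → E}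
    (hc : ∀ i, c i ∈ ν.support) {r : ℝ} (hr : 0 < r) :
    0 < μ (⋂ i, U i ⁻¹' Metric.ball (c i) r) := by
  have := hindep.measure_inter_preimage_eq_mul Finset.univ (sets := fun i => Metric.ball (c i) r)
    fun _ _ => measurableSet_ball
  simp only [Finset.mem_univ, Set.iInter_true] at this
  rw [this]
  refine CanonicallyOrderedAdd.prod_pos.2 fun i _ => ?_
  rw [← Measure.map_apply (hmeas i) measurableSet_ball, hlaw i]
  exact (Measure.mem_support_iff_forall _).1 (hc i) _ (Metric.ball_mem_nhds _ hr)

theorem ProbabilityTheory.iIndepFun.measure_isClusteredBy_pos [Fintype ι]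
    (hindep : iIndepFun U μ)
    (hmeas : ∀ i, Measurable (U i)) (hlaw : ∀ i, μ.map (U i) = ν) (hsupp : ν.support.Infinite)
    (κ : ι → ℕ) : 0 < μ {ω | ∃ ρ, IsClusteredBy (fun i => U i ω) κ ρ} := by
  let c : ℕ → E := fun m => hsupp.natEmbedding _ m
  have hc : Function.Injective c := Subtype.val_injective.comp (hsupp.natEmbedding _).injective
  obtain ⟨r, hr, hsep⟩ := (Set.finite_range (c ∘ κ)).exists_pos_forall_le_dist
  refine (hindep.measure_iInter_preimage_ball_pos hmeas hlaw (c := c ∘ κ)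
    (fun i => (hsupp.natEmbedding _ (κ i)).2) (by positivity : 0 < r / 4)).trans_le
    (measure_mono fun ω hω => ⟨r / 2, IsClusteredBy.of_dist_lt (c := c) ?_ ?_⟩)
  · exact fun i j hij => hsep _ ⟨i, rfl⟩ _ ⟨j, rfl⟩ (hc.ne hij)
  · simpa using hω

end Probability

theorem ae_distinctDists_and_not_indepFun_reflCount_sharedCount1 {Ω : Type*}
    [MeasurableSpace Ω] {μ : Measure Ω} [IsProbabilityMeasure μ] {d n : ℕ} (hn : 6 ≤ n)
    {U : Fin n → Ω → EuclideanSpace ℝ (Fin d)} (hmeas : ∀ i, Measurable (U i))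
    (hindep : iIndepFun U μ) {ν : Measure (EuclideanSpace ℝ (Fin d))}
    (hlaw : ∀ i, μ.map (U i) = ν) (hν : ∀ x r, ν (Metric.sphere x r) = 0) :
    (∀ᵐ ω ∂μ, DistinctDists (Set.range fun i => U i ω)) ∧
    ¬ IndepFun (fun ω => reflCount (Set.range fun i => U i ω))
        (fun ω => sharedCount1 (Set.range fun i => U i ω)) μ := by
  have hgood : ∀ᵐ ω ∂μ, Function.Injective (fun i => U i ω) ∧
      DistinctDists (Set.range fun i => U i ω) :=
    (hindep.ae_dist_ne_dist hmeas hlaw hν).mono fun ω h =>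
      injective_and_distinctDists_of_dist_ne_dist (by rw [Fintype.card_fin]; omega) h
  refine ⟨hgood.mono fun _ h => h.2, fun hind => ?_⟩
  have : NullSingletonClass ν := ⟨fun x => by simpa using hν x 0⟩
  have hsupp : ν.support.Infinite := Measure.support_infinite <| by
    rw [← hlaw ⟨0, by omega⟩]
    exact (Measure.isProbabilityMeasure_map (hmeas _).aemeasurable).ne_zero
  let R := fun ω => reflCount (Set.range fun i => U i ω)
  let Q := fun ω => sharedCount1 (Set.range fun i => U i ω)
  have hR : 0 < μ (R ⁻¹' {m | n / 2 ≤ m}) :=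
    (hindep.measure_isClusteredBy_pos hmeas hlaw hsupp fun i => (i : ℕ) / 2).trans_le <|
      measure_mono_ae <| hgood.mono fun ω ⟨hinj, hd⟩ ⟨_, hc⟩ =>
        half_le_reflCount_of_isClusteredBy_pairs hinj hd hc
  have hQ : 0 < μ (Q ⁻¹' {m | 2 ≤ m}) :=
    (hindep.measure_isClusteredBy_pos hmeas hlaw hsupp
      fun i => if (i : ℕ) < 6 then (i : ℕ) / 3 else i).trans_le <|
      measure_mono_ae <| hgood.mono fun ω ⟨hinj, hd⟩ ⟨_, hc⟩ =>
        two_le_sharedCount1_of_isClusteredBy_triples hn hinj hd hc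
  have hRQ : μ (R ⁻¹' {m | n / 2 ≤ m} ∩ Q ⁻¹' {m | 2 ≤ m}) = 0 :=
    measure_eq_zero_iff_ae_notMem.2 <| hgood.mono fun ω ⟨hinj, _⟩ ⟨hRω, hQω⟩ => by
      change n / 2 ≤ reflCount _ at hRω
      change 2 ≤ sharedCount1 _ at hQω
      have := sharedCount1_le_one_of_ncard_le (Set.finite_range _)
        (by rw [Set.ncard_range_of_injective hinj, Nat.card_fin]; omega)
      omega
  have hprod : μ (R ⁻¹' {m | n / 2 ≤ m} ∩ Q ⁻¹' {m | 2 ≤ m}) =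
      μ (R ⁻¹' {m | n / 2 ≤ m}) * μ (Q ⁻¹' {m | 2 ≤ m}) :=
    hind.measure_inter_preimage_eq_mul _ _ .of_discrete .of_discrete
  exact (ENNReal.mul_pos hR.ne' hQ.ne').ne' (hprod.symm.trans hRQ)

theorem reflCount_not_indep_sharedCount_general (d : ℕ) (hd : 1 ≤ d)
    (B₀ : Set (EuclideanSpace ℝ (Fin d)))
    (n : ℕ) (hn : 6 ≤ n)
    (Ω : Type*) [MeasureSpace Ω] [IsProbabilityMeasure (ℙ : Measure Ω)]
    (U : Fin n → Ω → EuclideanSpace ℝ (Fin d)) (hUmeas : ∀ i, Measurable (U i))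
    (hindep : iIndepFun U ℙ)
    (hlaw : ∀ i, Measure.map (U i) ℙ =
      ProbabilityTheory.cond MeasureTheory.volume B₀) :
    (∀ᵐ ω ∂(ℙ : Measure Ω), DistinctDists (Set.range fun i => U i ω)) ∧
    ¬ IndepFun (fun ω => reflCount (Set.range fun i => U i ω))
        (fun ω => sharedCount1 (Set.range fun i => U i ω)) ℙ := by
  have : Nonempty (Fin d) := ⟨⟨0, hd⟩⟩
  exact ae_distinctDists_and_not_indepFun_reflCount_sharedCount1 hn hUmeas hindep hlaw
    fun x r => cond_absolutelyContinuous (Measure.addHaar_sphere volume x r)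

/-- For `n ≥ 6` i.i.d. uniform points on a bounded Borel set `B₀ ⊆ ℝ^d` (`d ≥ 1`) of positive
volume with null boundary, almost surely all pairwise distances are distinct, and the number of
reflexive NN pairs and the number of shared NN triples are *not* independent random variables. -/
theorem reflCount_not_indep_sharedCount (d : ℕ) (hd : 1 ≤ d)
    (B₀ : Set (EuclideanSpace ℝ (Fin d))) (hmeas : MeasurableSet B₀)
    (hbdd : Bornology.IsBounded B₀) (hpos : 0 < MeasureTheory.volume B₀)
    (hbound : MeasureTheory.volume (frontier B₀) = 0)
    (n : ℕ) (hn : 6 ≤ n)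
    (Ω : Type*) [MeasureSpace Ω] [IsProbabilityMeasure (ℙ : Measure Ω)]
    (U : Fin n → Ω → EuclideanSpace ℝ (Fin d)) (hUmeas : ∀ i, Measurable (U i))
    (hindep : iIndepFun U ℙ)
    (hlaw : ∀ i, Measure.map (U i) ℙ =
      ProbabilityTheory.cond MeasureTheory.volume B₀) :
    (∀ᵐ ω ∂(ℙ : Measure Ω), DistinctDists (Set.range fun i => U i ω)) ∧
    ¬ IndepFun (fun ω => reflCount (Set.range fun i => U i ω))
        (fun ω => sharedCount1 (Set.range fun i => U i ω)) ℙ :=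
  reflCount_not_indep_sharedCount_general d hd B₀ n hn Ω U hUmeas hindep hlaw
end
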